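/- arXiv:2101.09132 — 6 statements merged into one kernel-verified Lean document; each statement's English description precedes it below -/
import Mathlib

section
/- (Generalized Newton–Leibniz formula) For any u ∈ Cⁿ on the n-rectangle P with bottom corner x and top corner x', u(x') − u(x) = Σ_{k=1}^{n} Σ_{1≤i_1<...<i_k≤n} ∫_{P_{i_1...i_k}} ∂^k u/∂x_{i_1}⋯∂x_{i_k} dη_{i_1}⋯dη_{i_k}, where P_{i_1...i_k} is the k-dimensional face of P containing x spanned by directions i_1,...,i_k. -/
/-! Induct on the set `T` of directions in which the corner has already been moved from `x`
to `x'`. Moving one more coordinate `j` is the fundamental theorem of calculus along the edge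
`[x_j, x'_j]`; the integrand `∂_j D` is expanded by the induction hypothesis at every point of
that edge, and integrating in `t_j` turns each face integral over `S ⊆ T` into the one over
`insert j S` by Fubini. The faces indexed by subsets of `insert j T` are thus exactly those
avoiding `j` (the term before moving) and those containing `j` (the integral). -/

open MeasureTheory Finset

/-- The `k`-dimensional face integral `∫_{P_{i_1...i_k}} ∂^k u/∂x_{i_1}⋯∂x_{i_k}`:
for a set `S` of coordinate directions, the integral of `D S` (the mixed partial of `u`
over the directions in `S`) over the face of the rectangle `[x, x']` spanned by the
directions in `S`, with all other coordinates frozen at their values in `x`. -/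
noncomputable def faceIntegral {n : ℕ} (x x' : Fin n → ℝ)
    (D : Finset (Fin n) → (Fin n → ℝ) → ℝ) (S : Finset (Fin n)) : ℝ :=
  ∫ η : (↥S → ℝ) in Set.univ.pi (fun i : ↥S => Set.Icc (x i) (x' i)),
    D S (fun j => if h : j ∈ S then η ⟨j, h⟩ else x j)

open Function

namespace MeasureTheory

variable {δ : Type*} {X : δ → Type*} [∀ i, MeasurableSpace (X i)] {μ : ∀ i, Measure (X i)}
  [DecidableEq δ] {E : Type*} [NormedAddCommGroup E]

theorem integrable_prod_of_union [∀ i, SigmaFinite (μ i)] {s t : Finset δ} (hst : Disjoint s t)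
    {f : (∀ i, X i) → E} {x : ∀ i, X i}
    (hf : Integrable (fun y => f (updateFinset x (s ∪ t) y))
      (Measure.pi fun i : ↥(s ∪ t) => μ i)) :
    Integrable (fun p : (∀ i : s, X i) × (∀ i : t, X i) =>
        f (updateFinset (updateFinset x s p.1) t p.2))
      ((Measure.pi fun i : s => μ i).prod (Measure.pi fun i : t => μ i)) := by
  refine (((measurePreserving_piFinsetUnion hst μ).integrable_comp_emb
    (MeasurableEquiv.piFinsetUnion X hst).measurableEmbedding).mpr hf).congr
    (ae_of_all _ fun p => ?_)
  exact congrArg f (updateFinset_updateFinset hst).symm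

variable [NormedSpace ℝ E]

variable (μ) in
noncomputable def marginal (s : Finset δ) (f : (∀ i, X i) → E) (x : ∀ i, X i) : E :=
  ∫ y : ∀ i : s, X i, f (updateFinset x s y) ∂Measure.pi fun i : s => μ i

@[simp] theorem marginal_empty [CompleteSpace E] (f : (∀ i, X i) → E) :
    marginal μ ∅ f = f := by
  ext1 x
  simp_rw [marginal, Measure.pi_of_empty fun i : (∅ : Finset δ) => μ i]
  exact integral_dirac' _ _ (stronglyMeasurable_const' fun _ _ => by congr 1)

theorem marginal_singleton (f : (∀ i, X i) → E) (i : δ) (x : ∀ i, X i) :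
    marginal μ {i} f x = ∫ t, f (update x i t) ∂μ i := by
  let α : Type _ := ({i} : Finset δ)
  calc marginal μ {i} f x
      = ∫ t : X (default : α),
          f (updateFinset x {i} ((MeasurableEquiv.piUnique fun j : α ↦ X j).symm t))
          ∂μ (default : α) := by
        rw [marginal,
          ← ((measurePreserving_piUnique fun j : α ↦ μ j).symm _).integral_comp']
    _ = ∫ t, f (update x i t) ∂μ i := by simp [update_eq_updateFinset]; rfl

variable [∀ i, SigmaFinite (μ i)] {s t : Finset δ} {f : (∀ i, X i) → E} {x : ∀ i, X i}

theorem marginal_union (hst : Disjoint s t)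
    (hf : Integrable (fun y => f (updateFinset x (s ∪ t) y))
      (Measure.pi fun i : ↥(s ∪ t) => μ i)) :
    marginal μ (s ∪ t) f x = marginal μ s (marginal μ t f) x := by
  calc marginal μ (s ∪ t) f x
      = ∫ p, f (updateFinset (updateFinset x s p.1) t p.2)
          ∂(Measure.pi fun i : s => μ i).prod (Measure.pi fun i : t => μ i) := by
        rw [marginal, ← (measurePreserving_piFinsetUnion hst μ).integral_comp']
        simp_rw [updateFinset_updateFinset hst]
        rfl
    _ = marginal μ s (marginal μ t f) x := integral_prod _ (integrable_prod_of_union hst hf)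

theorem integrable_marginal_of_union (hst : Disjoint s t)
    (hf : Integrable (fun y => f (updateFinset x (s ∪ t) y))
      (Measure.pi fun i : ↥(s ∪ t) => μ i)) :
    Integrable (fun y => marginal μ t f (updateFinset x s y)) (Measure.pi fun i : s => μ i) :=
  (integrable_prod_of_union hst hf).integral_prod_left

theorem marginal_insert {i : δ} (hi : i ∉ s)
    (hf : Integrable (fun y => f (updateFinset x (insert i s) y))
      (Measure.pi fun j : ↥(insert i s) => μ j)) :
    marginal μ (insert i s) f x = ∫ t, marginal μ s f (update x i t) ∂μ i := by
  rw [insert_eq] at hf ⊢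
  rw [marginal_union (disjoint_singleton_left.mpr hi) hf, marginal_singleton]

theorem integrable_marginal_update {i : δ} (hi : i ∉ s)
    (hf : Integrable (fun y => f (updateFinset x (insert i s) y))
      (Measure.pi fun j : ↥(insert i s) => μ j)) :
    Integrable (fun t => marginal μ s f (update x i t)) (μ i) := by
  rw [insert_eq] at hf
  have := integrable_marginal_of_union (disjoint_singleton_left.mpr hi) hf
  simp_rw [updateFinset_singleton] at this
  exact ((measurePreserving_piUnique fun j : ({i} : Finset δ) => μ j).integrable_comp_emb
    (MeasurableEquiv.piUnique _).measurableEmbedding).mp this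

end MeasureTheory

section Box

open Set

variable {ι : Type*} [DecidableEq ι]

theorem continuous_updateFinset {X : ι → Type*} [∀ i, TopologicalSpace (X i)] (z : ∀ i, X i)
    (s : Finset ι) : Continuous (updateFinset z s) := by
  refine continuous_pi fun i => ?_
  by_cases hi : i ∈ s
  · simpa only [updateFinset, dif_pos hi] using continuous_apply (⟨i, hi⟩ : s)
  · simpa only [updateFinset, dif_neg hi] using continuous_const

theorem updateFinset_mem_univ_pi {X : ι → Type*} {t : ∀ i, Set (X i)} {z : ∀ i, X i}
    (hz : z ∈ univ.pi t) {s : Finset ι} {y : ∀ i : s, X i} (hy : y ∈ univ.pi fun i : s => t i) :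
    updateFinset z s y ∈ univ.pi t := by
  intro i _
  by_cases hi : i ∈ s
  · simpa only [updateFinset, dif_pos hi] using hy ⟨i, hi⟩ trivial
  · simpa only [updateFinset, dif_neg hi] using hz i trivial

theorem update_mem_Icc {α : ι → Type*} [∀ i, Preorder (α i)] {x x' w : ∀ i, α i}
    (hw : w ∈ Icc x x') {j : ι} {t : α j} (ht : t ∈ Icc (x j) (x' j)) :
    update w j t ∈ Icc x x' := by
  rw [← pi_univ_Icc] at hw ⊢
  exact (update_mem_pi_iff_of_mem hw).mpr fun _ => ht

variable {x x' : ι → ℝ} {E : Type*} [NormedAddCommGroup E]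

noncomputable abbrev intervalVolume (x x' : ι → ℝ) (i : ι) : Measure ℝ :=
  volume.restrict (Icc (x i) (x' i))

theorem integrable_comp_updateFinset {f : (ι → ℝ) → E} (hf : ContinuousOn f (Icc x x'))
    {z : ι → ℝ} (hz : z ∈ Icc x x') (s : Finset ι) :
    Integrable (fun y => f (updateFinset z s y))
      (Measure.pi fun i : s => intervalVolume x x' i) := by
  rw [← Measure.restrict_pi_pi, ← volume_pi]
  rw [← pi_univ_Icc] at hf hz
  exact (hf.comp (continuous_updateFinset z s).continuousOn
    fun y hy => updateFinset_mem_univ_pi hz hy).integrableOn_compact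
    (isCompact_univ_pi fun _ => isCompact_Icc)

variable [NormedSpace ℝ E]

theorem integrable_marginal_update_of_continuousOn {f : (ι → ℝ) → E}
    (hf : ContinuousOn f (Icc x x')) {z : ι → ℝ} (hz : z ∈ Icc x x') {j : ι} {s : Finset ι}
    (hj : j ∉ s) :
    Integrable (fun t => marginal (intervalVolume x x') s f (update z j t))
      (intervalVolume x x' j) :=
  integrable_marginal_update (μ := intervalVolume x x') hj
    (integrable_comp_updateFinset hf hz _)

theorem setIntegral_marginal_update {f : (ι → ℝ) → E} (hf : ContinuousOn f (Icc x x'))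
    {z : ι → ℝ} (hz : z ∈ Icc x x') {j : ι} {s : Finset ι} (hj : j ∉ s) :
    ∫ t in Icc (x j) (x' j), marginal (intervalVolume x x') s f (update z j t) =
      marginal (intervalVolume x x') (insert j s) f z :=
  (marginal_insert (μ := intervalVolume x x') hj (integrable_comp_updateFinset hf hz _)).symm

variable [CompleteSpace E]

theorem sub_eq_integral_update {f g : (ι → ℝ) → E} {j : ι} {w : ι → ℝ} (hw : w ∈ Icc x x')
    (hf : ∀ η ∈ Icc x x', HasDerivAt (fun t => f (update η j t)) (g η) (η j))
    (hg : ContinuousOn g (Icc x x')) :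
    f (update w j (x' j)) - f (update w j (x j)) = ∫ t in Icc (x j) (x' j), g (update w j t) := by
  have hxj : x j ≤ x' j := hw.1 j |>.trans (hw.2 j)
  have hline : MapsTo (update w j) (Icc (x j) (x' j)) (Icc x x') :=
    fun _ ht => update_mem_Icc hw ht
  have hderiv : ∀ t ∈ uIcc (x j) (x' j),
      HasDerivAt (fun s => f (update w j s)) (g (update w j t)) t := by
    intro t ht
    rw [uIcc_of_le hxj] at ht
    simpa only [update_idem, update_self] using hf _ (hline ht)
  have hcont : ContinuousOn (fun t => g (update w j t)) (uIcc (x j) (x' j)) := by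
    rw [uIcc_of_le hxj]
    exact hg.comp (by fun_prop : Continuous (update w j)).continuousOn hline
  rw [← intervalIntegral.integral_eq_sub_of_hasDerivAt hderiv hcont.intervalIntegrable,
    intervalIntegral.integral_of_le hxj, integral_Icc_eq_integral_Ioc]

theorem apply_piecewise_eq_sum_marginal {D : Finset ι → (ι → ℝ) → E}
    (hderiv : ∀ S i, i ∉ S → ∀ η ∈ Icc x x',
      HasDerivAt (fun t => D S (update η i t)) (D (insert i S) η) (η i))
    (hcont : ∀ S, ContinuousOn (D S) (Icc x x')) (T : Finset ι) :
    ∀ S₀, Disjoint S₀ T → ∀ z ∈ Icc x x', (∀ i ∈ T, z i = x i) →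
      D S₀ (T.piecewise x' z) =
        ∑ S ∈ T.powerset, marginal (intervalVolume x x') S (D (S₀ ∪ S)) z := by
  induction T using Finset.induction_on with
  | empty => intro S₀ _ z _ _; simp
  | insert j T hjT ih =>
    intro S₀ hdisj z hz hzx
    have hjS₀ : j ∉ S₀ := disjoint_right.mp hdisj (mem_insert_self j T)
    have hS₀T : Disjoint S₀ T := hdisj.mono_right (subset_insert j T)
    set w := T.piecewise x' z with hw_def
    have hw : w ∈ Icc x x' :=
      piecewise_mem_Icc_of_mem_of_mem _ ⟨hz.1.trans hz.2, le_rfl⟩ hz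
    have hwj : update w j (x j) = w := by
      rw [update_eq_self_iff, hw_def, Finset.piecewise_eq_of_notMem _ _ _ hjT,
        hzx j (mem_insert_self j T)]
    have hline : ∀ t ∈ Icc (x j) (x' j), D (insert j S₀) (update w j t) =
        ∑ S ∈ T.powerset,
          marginal (intervalVolume x x') S (D (insert j S₀ ∪ S)) (update z j t) := by
      intro t ht
      rw [hw_def, update_piecewise_of_notMem _ _ _ hjT]
      refine ih _ (disjoint_insert_left.mpr ⟨hjT, hS₀T⟩) _ (update_mem_Icc hz ht) fun i hi => ?_
      rw [update_of_ne (ne_of_mem_of_not_mem hi hjT)]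
      exact hzx i (mem_insert_of_mem hi)
    have hjS : ∀ S ∈ T.powerset, j ∉ S := fun S hS h => hjT (mem_powerset.mp hS h)
    have hfubini : ∀ S ∈ T.powerset, ∫ t in Icc (x j) (x' j),
          marginal (intervalVolume x x') S (D (insert j S₀ ∪ S)) (update z j t) =
        marginal (intervalVolume x x') (insert j S) (D (S₀ ∪ insert j S)) z := fun S hS => by
      rw [Finset.insert_union, ← Finset.union_insert,
        setIntegral_marginal_update (hcont _) hz (hjS S hS)]
    calc D S₀ ((insert j T).piecewise x' z)
        = D S₀ w + ∫ t in Icc (x j) (x' j), D (insert j S₀) (update w j t) := by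
          rw [← sub_eq_integral_update hw (hderiv S₀ j hjS₀) (hcont _), hwj,
            Finset.piecewise_insert, add_sub_cancel]
      _ = ∑ S ∈ T.powerset, marginal (intervalVolume x x') S (D (S₀ ∪ S)) z +
            ∑ S ∈ T.powerset,
              marginal (intervalVolume x x') (insert j S) (D (S₀ ∪ insert j S)) z := by
          rw [ih S₀ hS₀T z hz fun i hi => hzx i (mem_insert_of_mem hi),
            setIntegral_congr_fun measurableSet_Icc hline, integral_finsetSum _
              fun S hS => integrable_marginal_update_of_continuousOn (hcont _) hz (hjS S hS)]
          exact congrArg _ (sum_congr rfl hfubini)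
      _ = _ := (sum_powerset_insert hjT _).symm

end Box

theorem faceIntegral_eq_marginal {n : ℕ} (x x' : Fin n → ℝ)
    (D : Finset (Fin n) → (Fin n → ℝ) → ℝ) (S : Finset (Fin n)) :
    faceIntegral x x' D S = marginal (intervalVolume x x') S (D S) x := by
  rw [faceIntegral, marginal, volume_pi, Measure.restrict_pi_pi]
  rfl

theorem generalized_newton_leibniz_general {n : ℕ}
    (x x' : Fin n → ℝ) (hxx : ∀ i, x i < x' i)
    (U : Set (Fin n → ℝ))
    (hPU : Set.univ.pi (fun i => Set.Icc (x i) (x' i)) ⊆ U)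
    (u : (Fin n → ℝ) → ℝ)
    (D : Finset (Fin n) → (Fin n → ℝ) → ℝ)
    (hD0 : D ∅ = u)
    (hDderiv : ∀ (S : Finset (Fin n)) (i : Fin n), i ∉ S → ∀ η ∈ U,
      HasDerivAt (fun t => D S (Function.update η i t)) (D (insert i S) η) (η i))
    (hDcont : ∀ S, ContinuousOn (D S) U) :
    u x' - u x =
      ∑ S ∈ Finset.univ.filter (fun S : Finset (Fin n) => S ≠ ∅),
        faceIntegral x x' D S := by
  have hPU' : Set.Icc x x' ⊆ U := Set.pi_univ_Icc x x' ▸ hPU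
  have key := apply_piecewise_eq_sum_marginal (fun S i hi η hη => hDderiv S i hi η (hPU' hη))
    (fun S => (hDcont S).mono hPU') univ ∅ (disjoint_empty_left _) x
    ⟨le_rfl, fun i => (hxx i).le⟩ fun _ _ => rfl
  rw [piecewise_univ, hD0, powerset_univ, ← add_sum_erase _ _ (mem_univ ∅), empty_union,
    marginal_empty, hD0] at key
  simp only [key, filter_ne', empty_union, faceIntegral_eq_marginal, add_sub_cancel_left]

/-- **Generalized Newton–Leibniz formula.** Let `x_i < x_i'` for all `i` and let
`P = Π_i [x_i, x_i']`. Suppose `u` is Cⁿ on an open neighborhood `U` of `P`; the family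
`D` encodes all mixed partials with distinct indices: `D ∅ = u` and `D (insert i S)` is
the partial derivative of `D S` in the direction `i`, each `D S` being continuous on `U`.
Then `u(x') − u(x) = Σ_{∅ ≠ S ⊆ {1,...,n}} ∫_{P_S} ∂^|S| u/∂x_S`, the sum of the face
integrals over all `2ⁿ − 1` faces of `P` containing the bottom corner `x`. -/
theorem generalized_newton_leibniz {n : ℕ}
    (x x' : Fin n → ℝ) (hxx : ∀ i, x i < x' i)
    (U : Set (Fin n → ℝ)) (hU : IsOpen U)
    (hPU : Set.univ.pi (fun i => Set.Icc (x i) (x' i)) ⊆ U)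
    (u : (Fin n → ℝ) → ℝ)
    (D : Finset (Fin n) → (Fin n → ℝ) → ℝ)
    (hD0 : D ∅ = u)
    (hDderiv : ∀ (S : Finset (Fin n)) (i : Fin n), i ∉ S → ∀ η ∈ U,
      HasDerivAt (fun t => D S (Function.update η i t)) (D (insert i S) η) (η i))
    (hDcont : ∀ S, ContinuousOn (D S) U) :
    u x' - u x =
      ∑ S ∈ Finset.univ.filter (fun S : Finset (Fin n) => S ≠ ∅),
        faceIntegral x x' D S :=
  generalized_newton_leibniz_general x x' hxx U hPU u D hD0 hDderiv hDcont
end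

section
/- Let 1 < p < ∞ and let v : [a,b] → ℝ be C¹ with v, v' ∈ Lᵖ(a,b). Then |v(a)|ᵖ ≤ C (‖v‖_{Lᵖ(a,b)}ᵖ + ‖v'‖_{Lᵖ(a,b)}ᵖ) where C = max(p − 1 + (b−a)^{−1}, 1). (One-dimensional trace inequality obtained via the cutoff function ζ(t) = 1 − (t−a)/(b−a), integration by parts, and Young's inequality.) -/
open MeasureTheory intervalIntegral

/-!
Multiply `|v|ᵖ` by the linear cutoff `ζ t = (b - t) / (b - a)`, which is `1` at `a` and `0` at `b`,
and integrate by parts: `|v a|ᵖ = (b - a)⁻¹ ∫ |v|ᵖ - ∫ ζ (|v|ᵖ)'`. Since `0 ≤ ζ ≤ 1` and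
`|(|v|ᵖ)'| = p |v|ᵖ⁻¹ |v'|`, Young's inequality with exponents `p / (p - 1)` and `p` bounds the
second term by `(p - 1) ∫ |v|ᵖ + ∫ |v'|ᵖ`.
-/

lemma apply_left_eq_integral_linear_cutoff {a b : ℝ} (hab : a ≠ b) {u u' : ℝ → ℝ}
    (hu : ∀ t ∈ Set.uIcc a b, HasDerivWithinAt u (u' t) (Set.uIcc a b) t)
    (hu' : IntervalIntegrable u' volume a b) :
    u a = (b - a)⁻¹ * (∫ t in a..b, u t) - ∫ t in a..b, (b - t) / (b - a) * u' t := by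
  have hcutoff (t : ℝ) : HasDerivWithinAt (fun s => (b - s) / (b - a)) (-(b - a)⁻¹)
      (Set.uIcc a b) t := by
    simpa [neg_div] using ((hasDerivAt_id t).const_sub b).div_const (b - a) |>.hasDerivWithinAt
  rw [integral_mul_deriv_eq_deriv_mul_of_hasDerivWithinAt (fun t _ => hcutoff t) hu
    intervalIntegrable_const hu', intervalIntegral.integral_const_mul]
  field_simp
  ring

lemma abs_abs_rpow_sub_two_mul_self {p : ℝ} (hp : p ≠ 1) (z : ℝ) :
    |(|z| ^ (p - 2) * z)| = |z| ^ (p - 1) := by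
  rcases eq_or_ne z 0 with rfl | hz
  · simp [Real.zero_rpow (sub_ne_zero.2 hp)]
  · rw [abs_mul, abs_of_nonneg (by positivity), show p - 1 = p - 2 + 1 by ring,
      Real.rpow_add_one (abs_ne_zero.2 hz)]

lemma continuous_deriv_abs_rpow {p : ℝ} (hp : 1 < p) :
    Continuous fun x : ℝ => p * |x| ^ (p - 2) * x := by
  have hderiv : deriv (fun x : ℝ => |x| ^ p) = fun x => p * |x| ^ (p - 2) * x :=
    funext fun x => (hasDerivAt_abs_rpow x hp).deriv
  simpa [hderiv] using (contDiff_norm_rpow (E := ℝ) hp).continuous_deriv le_rfl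

lemma mul_rpow_sub_one_mul_le {p x y : ℝ} (hp : 1 < p) (hx : 0 ≤ x) (hy : 0 ≤ y) :
    p * (x ^ (p - 1) * y) ≤ (p - 1) * x ^ p + y ^ p := by
  have hq : (p / (p - 1)).HolderConjugate p := (Real.HolderConjugate.conjExponent hp).symm
  have hyoung := Real.young_inequality_of_nonneg (Real.rpow_nonneg hx (p - 1)) hy hq
  rw [← Real.rpow_mul hx, hq.symm.sub_one_mul_conj] at hyoung
  calc p * (x ^ (p - 1) * y) ≤ p * (x ^ p / (p / (p - 1)) + y ^ p / p) := by gcongr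
    _ = (p - 1) * x ^ p + y ^ p := by field_simp

lemma neg_mul_mul_deriv_abs_rpow_le {p ζ : ℝ} (hp : 1 < p) (hζ0 : 0 ≤ ζ) (hζ1 : ζ ≤ 1)
    (z w : ℝ) : -(ζ * (p * |z| ^ (p - 2) * z * w)) ≤ (p - 1) * |z| ^ p + |w| ^ p :=
  calc -(ζ * (p * |z| ^ (p - 2) * z * w)) ≤ ζ * |p * (|z| ^ (p - 2) * z) * w| := by
        rw [← abs_of_nonneg hζ0, ← abs_mul, abs_of_nonneg hζ0, ← mul_assoc p]
        exact neg_le_abs _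
    _ ≤ |p * (|z| ^ (p - 2) * z) * w| := mul_le_of_le_one_left (abs_nonneg _) hζ1
    _ = p * (|z| ^ (p - 1) * |w|) := by
        rw [abs_mul, abs_mul, abs_of_pos (by linarith), abs_abs_rpow_sub_two_mul_self hp.ne',
          mul_assoc]
    _ ≤ (p - 1) * |z| ^ p + |w| ^ p := mul_rpow_sub_one_mul_le hp (abs_nonneg _) (abs_nonneg _)

lemma neg_integral_linear_cutoff_mul_deriv_abs_rpow_le {p a b : ℝ} (hp : 1 < p) (hab : a < b)
    {v v' : ℝ → ℝ} (hv : IntervalIntegrable (fun t => |v t| ^ p) volume a b)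
    (hv' : IntervalIntegrable (fun t => |v' t| ^ p) volume a b)
    (hu' : IntervalIntegrable (fun t => p * |v t| ^ (p - 2) * v t * v' t) volume a b) :
    -∫ t in a..b, (b - t) / (b - a) * (p * |v t| ^ (p - 2) * v t * v' t) ≤
      (p - 1) * (∫ t in a..b, |v t| ^ p) + ∫ t in a..b, |v' t| ^ p := by
  have hpointwise (t : ℝ) (ht : t ∈ Set.Icc a b) :
      -((b - t) / (b - a) * (p * |v t| ^ (p - 2) * v t * v' t)) ≤
        (p - 1) * |v t| ^ p + |v' t| ^ p :=
    neg_mul_mul_deriv_abs_rpow_le hp (div_nonneg (by linarith [ht.2]) (by linarith))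
      ((div_le_one (by linarith)).2 (by linarith [ht.1])) (v t) (v' t)
  rw [← intervalIntegral.integral_neg, ← intervalIntegral.integral_const_mul,
    ← intervalIntegral.integral_add (hv.const_mul _) hv']
  exact integral_mono_on hab.le (hu'.continuousOn_mul (by fun_prop)).neg
    ((hv.const_mul _).add hv') hpointwise

/-- **One-dimensional trace inequality.** Let `1 < p < ∞`, `a < b`, and let `v` be C¹
on `[a,b]` with derivative `v'`. Then
`|v(a)|ᵖ ≤ C (‖v‖_{Lᵖ(a,b)}ᵖ + ‖v'‖_{Lᵖ(a,b)}ᵖ)` with `C = max (p − 1 + (b−a)⁻¹) 1`. -/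
theorem one_dim_trace_inequality
    (p : ℝ) (hp : 1 < p) (a b : ℝ) (hab : a < b)
    (v v' : ℝ → ℝ)
    (hv : ∀ t ∈ Set.Icc a b, HasDerivWithinAt v (v' t) (Set.Icc a b) t)
    (hv' : ContinuousOn v' (Set.Icc a b)) :
    |v a| ^ p ≤ max (p - 1 + (b - a)⁻¹) 1 *
      ((∫ t in a..b, |v t| ^ p) + ∫ t in a..b, |v' t| ^ p) := by
  have hv_cont : ContinuousOn v (Set.Icc a b) := fun t ht => (hv t ht).continuousWithinAt
  have hu : ∀ t ∈ Set.uIcc a b, HasDerivWithinAt (fun s => |v s| ^ p)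
      (p * |v t| ^ (p - 2) * v t * v' t) (Set.uIcc a b) t :=
    Set.uIcc_of_le hab.le ▸ fun t ht =>
      (hasDerivAt_abs_rpow (v t) hp).comp_hasDerivWithinAt t (hv t ht)
  have hu'_int : IntervalIntegrable (fun t => p * |v t| ^ (p - 2) * v t * v' t) volume a b :=
    (((continuous_deriv_abs_rpow hp).comp_continuousOn hv_cont).mul hv').intervalIntegrable_of_Icc
      hab.le
  have hIv : IntervalIntegrable (fun t => |v t| ^ p) volume a b :=
    (hv_cont.abs.rpow_const fun _ _ => Or.inr (by linarith)).intervalIntegrable_of_Icc hab.le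
  have hIv' : IntervalIntegrable (fun t => |v' t| ^ p) volume a b :=
    (hv'.abs.rpow_const fun _ _ => Or.inr (by linarith)).intervalIntegrable_of_Icc hab.le
  have hyoung := neg_integral_linear_cutoff_mul_deriv_abs_rpow_le hp hab hIv hIv' hu'_int
  have hI : 0 ≤ ∫ t in a..b, |v t| ^ p := integral_nonneg hab.le fun _ _ => by positivity
  have hI' : 0 ≤ ∫ t in a..b, |v' t| ^ p := integral_nonneg hab.le fun _ _ => by positivity
  have hM : p - 1 + (b - a)⁻¹ ≤ max (p - 1 + (b - a)⁻¹) 1 := le_max_left _ _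
  have hM' : 1 ≤ max (p - 1 + (b - a)⁻¹) 1 := le_max_right _ _
  rw [apply_left_eq_integral_linear_cutoff hab.ne hu hu'_int]
  nlinarith
end

section
/- Let 1 < p < ∞ and n ∈ ℕ. For any u ∈ S_p^1(ℝⁿ) ∩ C^n_loc(ℝⁿ) and any x, x' ∈ ℝⁿ: |u(x) − u(x')| ≤ [ ((1+p)^{1/p} + |x−x'|^{(p−1)/p})ⁿ − (1+p)^{n/p} ] ‖u‖_{S_p^1(ℝⁿ)}. -/
/-!
In one variable, `|g s|^p ≤ (1 + p) ∫ (|g|^p + |g'|^p)`: pick `t₀ ∈ [s - 1, s]` where `|g|^p` is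
at most its mean and integrate `(|g|^p)'` from `t₀` to `s`, using
`|(|g|^p)'| = p |g|^(p-1) |g'| ≤ p (|g|^p + |g'|^p)`. Freezing the first coordinate and applying
this variable by variable (with Fubini) gives the sup bound `|u y|^p ≤ (1 + p)^n ‖u‖^p`, where
`‖u‖` is the `S_p^1` norm.

For the oscillation, go from `x` to `x'` first along the first coordinate. By Hölder on that
segment, `|u x - u (x'₀, x̃)| ≤ |x₀ - x'₀|^((p-1)/p) (∫ |∂₀u (t, x̃)|^p dt)^(1/p)`, and the sup
bound for `∂₀u` on the slices `{x₀ = t}` bounds the last factor by `(1 + p)^(n/p) ‖u‖`. The rest of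
the path lies in the slice `{x₀ = x'₀}`, whose `S_p^1` norm is at most `A ‖u‖` with
`A = (1 + p)^(1/p)`, by the one-variable estimate. Induction on `n` then works with the claim in the
form `|u x - u x'| + Aⁿ ‖u‖ ≤ ∏ᵢ (A + |xᵢ - x'ᵢ|^((p-1)/p)) ‖u‖`, which stays true when `‖u‖` is
replaced by anything larger, because the product is at least `Aⁿ`.
-/

open MeasureTheory Finset

/-- Euclidean distance on ℝⁿ. -/
noncomputable def euclDist {n : ℕ} (x y : Fin n → ℝ) : ℝ :=
  Real.sqrt (∑ i, (x i - y i) ^ 2)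

open scoped ENNReal

variable {p : ℝ} {n : ℕ}

lemma rpow_sub_one_mul_le_rpow_add_rpow (hp : 1 ≤ p) {a b : ℝ} (ha : 0 ≤ a) (hb : 0 ≤ b) :
    a ^ (p - 1) * b ≤ a ^ p + b ^ p := by
  rcases le_total a b with hab | hba
  · calc a ^ (p - 1) * b ≤ b ^ (p - 1) * b := by gcongr
      _ = b ^ p := by rw [← Real.rpow_add_one' hb (by linarith), sub_add_cancel]
      _ ≤ a ^ p + b ^ p := le_add_of_nonneg_left (by positivity)
  · calc a ^ (p - 1) * b ≤ a ^ (p - 1) * a := by gcongr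
      _ = a ^ p := by rw [← Real.rpow_add_one' ha (by linarith), sub_add_cancel]
      _ ≤ a ^ p + b ^ p := le_add_of_nonneg_right (by positivity)

lemma enorm_norm_rpow {E : Type*} [SeminormedAddGroup E] (x : E) (hp : 0 ≤ p) :
    ‖‖x‖ ^ p‖ₑ = ‖x‖ₑ ^ p := by
  rw [Real.enorm_eq_ofReal (by positivity), ← ENNReal.ofReal_rpow_of_nonneg (norm_nonneg x) hp,
    ofReal_norm]

lemma contDiff_one_of_hasDerivAt {E : Type*} [NormedAddCommGroup E] [NormedSpace ℝ E]
    {g g' : ℝ → E} (hg : ∀ t, HasDerivAt g (g' t) t) (hg' : Continuous g') : ContDiff ℝ 1 g := by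
  rw [contDiff_one_iff_deriv, funext fun t => (hg t).deriv]
  exact ⟨fun t => (hg t).differentiableAt, hg'⟩

lemma enorm_sub_le_setLIntegral_uIcc_enorm_deriv {E : Type*} [NormedAddCommGroup E]
    [NormedSpace ℝ E] {f : ℝ → E} (hf : ContDiff ℝ 1 f) (a b : ℝ) :
    ‖f b - f a‖ₑ ≤ ∫⁻ t in Set.uIcc a b, ‖deriv f t‖ₑ := by
  rcases le_total a b with hab | hba
  · rw [Set.uIcc_of_le hab]
    exact enorm_sub_le_lintegral_deriv_of_contDiffOn_Icc hf.contDiffOn hab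
  · rw [Set.uIcc_of_ge hba, enorm_sub_rev]
    exact enorm_sub_le_lintegral_deriv_of_contDiffOn_Icc hf.contDiffOn hba

lemma enorm_deriv_norm_rpow_le (hp : 1 < p) {g g' : ℝ → ℝ} (hg : ∀ t, HasDerivAt g (g' t) t)
    (t : ℝ) :
    ‖deriv (fun s => ‖g s‖ ^ p) t‖ₑ ≤ ENNReal.ofReal p * (‖g t‖ₑ ^ p + ‖g' t‖ₑ ^ p) := by
  have hgd : Differentiable ℝ g := fun t => (hg t).differentiableAt
  have hreal : ‖deriv (fun s => ‖g s‖ ^ p) t‖ ≤ p * (‖g t‖ ^ p + ‖g' t‖ ^ p) := by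
    rw [norm_deriv_eq_norm_fderiv]
    refine (norm_fderiv_norm_rpow_le hgd hp).trans ?_
    rw [← norm_deriv_eq_norm_fderiv, (hg t).deriv, mul_assoc]
    gcongr
    exact rpow_sub_one_mul_le_rpow_add_rpow hp.le (norm_nonneg _) (norm_nonneg _)
  have hp0 : 0 ≤ p := by linarith
  rw [← enorm_norm_rpow _ hp0, ← enorm_norm_rpow _ hp0, ← ofReal_norm,
    Real.enorm_eq_ofReal (by positivity), Real.enorm_eq_ofReal (by positivity),
    ← ENNReal.ofReal_add (by positivity) (by positivity), ← ENNReal.ofReal_mul hp0]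
  exact ENNReal.ofReal_le_ofReal hreal

theorem enorm_rpow_le_lintegral_enorm_rpow_add (hp : 1 < p) {g g' : ℝ → ℝ}
    (hg : ∀ t, HasDerivAt g (g' t) t) (hg' : Continuous g') (s : ℝ) :
    ‖g s‖ₑ ^ p ≤ ENNReal.ofReal (1 + p) * ∫⁻ t, (‖g t‖ₑ ^ p + ‖g' t‖ₑ ^ p) := by
  have hp0 : 0 ≤ p := by linarith
  set G : ℝ → ℝ := fun t => ‖g t‖ ^ p
  have hGC : ContDiff ℝ 1 G := (contDiff_one_of_hasDerivAt hg hg').norm_rpow hp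
  have hvol : volume (Set.Icc (s - 1) s) = 1 := by simp [Real.volume_Icc]
  obtain ⟨t₀, -, ht₀⟩ := exists_le_setLAverage (μ := volume) (s := Set.Icc (s - 1) s)
    (f := fun t => ‖G t‖ₑ) (by simp [hvol]) (by simp [hvol]) hGC.continuous.enorm.aemeasurable
  rw [setLAverage_eq, hvol, div_one] at ht₀
  calc ‖g s‖ₑ ^ p = ‖G t₀ + (G s - G t₀)‖ₑ := by rw [add_sub_cancel, enorm_norm_rpow _ hp0]
    _ ≤ (∫⁻ t, ‖G t‖ₑ) + ∫⁻ t, ‖deriv G t‖ₑ :=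
      (enorm_add_le _ _).trans <| add_le_add (ht₀.trans (setLIntegral_le_lintegral _ _))
        ((enorm_sub_le_setLIntegral_uIcc_enorm_deriv hGC t₀ s).trans
          (setLIntegral_le_lintegral _ _))
    _ ≤ (∫⁻ t, (‖g t‖ₑ ^ p + ‖g' t‖ₑ ^ p)) +
          ∫⁻ t, ENNReal.ofReal p * (‖g t‖ₑ ^ p + ‖g' t‖ₑ ^ p) := by
      gcongr with t
      · rw [enorm_norm_rpow _ hp0]; exact le_self_add
      · exact enorm_deriv_norm_rpow_le hp hg t
    _ = ENNReal.ofReal (1 + p) * ∫⁻ t, (‖g t‖ₑ ^ p + ‖g' t‖ₑ ^ p) := by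
      rw [lintegral_const_mul' _ _ ENNReal.ofReal_ne_top, ENNReal.ofReal_add zero_le_one hp0,
        ENNReal.ofReal_one, add_mul, one_mul]

lemma ENNReal.pow_rpow_comm (x : ℝ≥0∞) (n : ℕ) (y : ℝ) : (x ^ n) ^ y = (x ^ y) ^ n := by
  rw [← ENNReal.rpow_natCast, ← ENNReal.rpow_mul, ← ENNReal.rpow_natCast, ← ENNReal.rpow_mul,
    mul_comm]

lemma add_mul_le_mul_of_le_of_le {R : Type*} [CommSemiring R] [PartialOrder R]
    [CanonicallyOrderedAdd R] [IsOrderedRing R] {a b c m m' : R} (h : a + c * m ≤ b * m)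
    (hcb : c ≤ b) (hm : m ≤ m') : a + c * m' ≤ b * m' := by
  obtain ⟨d, rfl⟩ := exists_add_of_le hm
  calc a + c * (m + d) = (a + c * m) + c * d := by ring
    _ ≤ b * m + b * d := add_le_add h (mul_le_mul_of_nonneg_right hcb zero_le)
    _ = b * (m + d) := by ring

theorem lintegral_enorm_le_lintegral_enorm_rpow {α E : Type*} [MeasurableSpace α] {μ : Measure α}
    [NormedAddCommGroup E] {f : α → E} (hp : 1 ≤ p) (hf : AEStronglyMeasurable f μ) :
    ∫⁻ a, ‖f a‖ₑ ∂μ ≤ (∫⁻ a, ‖f a‖ₑ ^ p ∂μ) ^ (1 / p) * μ Set.univ ^ ((p - 1) / p) := by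
  have h := eLpNorm'_le_eLpNorm'_mul_rpow_measure_univ one_pos hp hf
  rw [eLpNorm'_eq_lintegral_enorm, eLpNorm'_eq_lintegral_enorm] at h
  have hp0 : p ≠ 0 := by positivity
  convert h using 2 <;> [simp; (congr 1; field_simp)]

lemma Finset.sum_finset_fin_succ {M : Type*} [AddCommMonoid M] (f : Finset (Fin (n + 1)) → M) :
    ∑ S, f S =
      ∑ S : Finset (Fin n), (f (S.map (Fin.succEmb n)) + f (insert 0 (S.map (Fin.succEmb n)))) := by
  have huniv : (univ : Finset (Fin (n + 1))) = insert 0 (univ.map (Fin.succEmb n)) := by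
    ext i; cases i using Fin.cases <;> simp
  have h0 : (0 : Fin (n + 1)) ∉ (univ : Finset (Fin n)).map (Fin.succEmb n) := by
    simp [Fin.succ_ne_zero]
  have hpow : ((univ : Finset (Fin n)).map (Fin.succEmb n)).powerset =
      (univ : Finset (Finset (Fin n))).map (Finset.mapEmbedding (Fin.succEmb n)).toEmbedding := by
    ext T
    simp [Finset.subset_map_iff, eq_comm]
  rw [← Finset.powerset_univ, huniv, Finset.sum_powerset_insert h0, hpow,
    Finset.sum_map, Finset.sum_map, ← Finset.sum_add_distrib]
  rfl

lemma lintegral_fin_succ_cons {f : (Fin (n + 1) → ℝ) → ℝ≥0∞} (hf : Measurable f) :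
    ∫⁻ y, f y = ∫⁻ t, ∫⁻ z, f (Fin.cons t z) := by
  have hmp := (volume_preserving_piFinSuccAbove (fun _ : Fin (n + 1) => ℝ) 0).symm
  rw [← hmp.lintegral_comp hf, Measure.volume_eq_prod,
    lintegral_prod _ (by exact (hf.comp hmp.measurable).aemeasurable)]
  simp only [MeasurableEquiv.piFinSuccAbove_symm_apply, Fin.insertNthEquiv_zero]
  rfl

lemma lintegral_fin_succ_cons_swap {f : (Fin (n + 1) → ℝ) → ℝ≥0∞} (hf : Measurable f) :
    ∫⁻ y, f y = ∫⁻ z, ∫⁻ t, f (Fin.cons t z) := by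
  have hc : Continuous fun q : ℝ × (Fin n → ℝ) => (Fin.cons q.1 q.2 : Fin (n + 1) → ℝ) := by
    fun_prop
  rw [lintegral_fin_succ_cons hf]
  exact lintegral_lintegral_swap (by exact (hf.comp hc.measurable).aemeasurable)

lemma measurable_lintegral_fin_cons {F : (Fin (n + 1) → ℝ) → ℝ≥0∞} (hF : Measurable F) :
    Measurable fun t => ∫⁻ z : Fin n → ℝ, F (Fin.cons t z) :=
  Measurable.lintegral_prod_right' (f := fun q : ℝ × (Fin n → ℝ) => F (Fin.cons q.1 q.2))
    (hF.comp (continuous_fst.finCons continuous_snd).measurable)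

section MixedPartials

variable {ι : Type*} [DecidableEq ι]

/-- `D S` plays the role of the mixed partial derivative `∂^S u` of `u = D ∅`. -/
structure IsMixedPartials (D : Finset ι → (ι → ℝ) → ℝ) : Prop where
  hasDerivAt : ∀ S i, i ∉ S → ∀ η : ι → ℝ,
    HasDerivAt (fun t => D S (Function.update η i t)) (D (insert i S) η) (η i)
  continuous : ∀ S, Continuous (D S)

noncomputable def mixedNormPow [Fintype ι] (p : ℝ) (D : Finset ι → (ι → ℝ) → ℝ) : ℝ≥0∞ :=
  ∑ S, ∫⁻ y, ‖D S y‖ₑ ^ p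

end MixedPartials

/-- The mixed partials, in the last `n` variables, of `D B` restricted to the hyperplane `x₀ = t`.
It is used with `B = ∅` (slices of `u`) and `B = {0}` (slices of `∂₀u`). -/
def mixedSlice (D : Finset (Fin (n + 1)) → (Fin (n + 1) → ℝ) → ℝ)
    (B : Finset (Fin (n + 1))) (t : ℝ) : Finset (Fin n) → (Fin n → ℝ) → ℝ :=
  fun S z => D (B ∪ S.map (Fin.succEmb n)) (Fin.cons t z)

namespace IsMixedPartials

variable {D : Finset (Fin (n + 1)) → (Fin (n + 1) → ℝ) → ℝ}

lemma slice (hD : IsMixedPartials D) {B : Finset (Fin (n + 1))} (hB : B ⊆ {0}) (t : ℝ) :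
    IsMixedPartials (mixedSlice D B t) where
  hasDerivAt S i hi z := by
    have hi' : i.succ ∉ B ∪ S.map (Fin.succEmb n) := by
      simp only [Finset.mem_union, Finset.mem_map, Fin.coe_succEmb, Fin.succ_inj, not_or]
      exact ⟨fun h => Fin.succ_ne_zero i (Finset.mem_singleton.1 (hB h)), by simpa using hi⟩
    have h := hD.hasDerivAt _ _ hi' (Fin.cons t z)
    simp only [← Fin.cons_update, Fin.cons_succ] at h
    simpa [mixedSlice, Finset.map_insert, Finset.union_insert] using h
  continuous S := (hD.continuous _).comp (continuous_const.finCons continuous_id)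

lemma hasDerivAt_cons (hD : IsMixedPartials D) {S : Finset (Fin (n + 1))} (h0 : 0 ∉ S)
    (z : Fin n → ℝ) (t : ℝ) :
    HasDerivAt (fun s => D S (Fin.cons s z)) (D (insert 0 S) (Fin.cons t z)) t := by
  simpa [Fin.update_cons_zero] using hD.hasDerivAt S 0 h0 (Fin.cons t z)

end IsMixedPartials

lemma mixedNormPow_fin_succ {D : Finset (Fin (n + 1)) → (Fin (n + 1) → ℝ) → ℝ}
    (hD : ∀ S, Continuous (D S)) :
    mixedNormPow p D = ∑ S : Finset (Fin n), ∫⁻ y, (‖D (S.map (Fin.succEmb n)) y‖ₑ ^ p +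
      ‖D (insert 0 (S.map (Fin.succEmb n))) y‖ₑ ^ p) := by
  simp only [mixedNormPow, Finset.sum_finset_fin_succ]
  exact Finset.sum_congr rfl fun S _ =>
    (lintegral_add_left ((hD _).measurable.enorm.pow_const p) _).symm

lemma mixedNormPow_eq_lintegral_mixedSlice
    {D : Finset (Fin (n + 1)) → (Fin (n + 1) → ℝ) → ℝ} (hD : ∀ S, Continuous (D S)) :
    mixedNormPow p D =
      ∫⁻ t, (mixedNormPow p (mixedSlice D ∅ t) + mixedNormPow p (mixedSlice D {0} t)) := by
  have hmeas : ∀ S, Measurable fun y => ‖D S y‖ₑ ^ p :=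
    fun S => (hD S).measurable.enorm.pow_const p
  have hF : ∀ S : Finset (Fin n), Measurable fun y => ‖D (S.map (Fin.succEmb n)) y‖ₑ ^ p +
      ‖D (insert 0 (S.map (Fin.succEmb n))) y‖ₑ ^ p := fun S => (hmeas _).add (hmeas _)
  rw [mixedNormPow_fin_succ hD, Finset.sum_congr rfl fun S _ => lintegral_fin_succ_cons (hF S),
    ← lintegral_finsetSum _ fun S _ => measurable_lintegral_fin_cons (hF S)]
  refine lintegral_congr fun t => ?_
  simp only [mixedNormPow, mixedSlice, ← Finset.sum_add_distrib, Finset.empty_union,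
    ← Finset.insert_eq]
  exact Finset.sum_congr rfl fun S _ =>
    lintegral_add_left ((hmeas _).comp (by fun_prop : Continuous (Fin.cons t)).measurable) _

/-- Stated relative to a sup bound `hsup` in dimension `n`, so that it serves inside the induction
proving that bound as well as after it. -/
lemma lintegral_enorm_rpow_cons_add_le {K : ℝ≥0∞} (hK : K ≠ ⊤)
    (hsup : ∀ D' : Finset (Fin n) → (Fin n → ℝ) → ℝ, IsMixedPartials D' →
      ∀ z, ‖D' ∅ z‖ₑ ^ p ≤ K * mixedNormPow p D')
    {D : Finset (Fin (n + 1)) → (Fin (n + 1) → ℝ) → ℝ} (hD : IsMixedPartials D) (z : Fin n → ℝ) :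
    ∫⁻ t, (‖D ∅ (Fin.cons t z)‖ₑ ^ p + ‖D {0} (Fin.cons t z)‖ₑ ^ p) ≤ K * mixedNormPow p D := by
  rw [mixedNormPow_eq_lintegral_mixedSlice hD.continuous, ← lintegral_const_mul' _ _ hK]
  refine lintegral_mono fun t => ?_
  rw [mul_add]
  exact add_le_add (by simpa [mixedSlice] using hsup _ (hD.slice (empty_subset _) t) z)
    (by simpa [mixedSlice] using hsup _ (hD.slice subset_rfl t) z)

theorem IsMixedPartials.enorm_rpow_le (hp : 1 < p) {D : Finset (Fin n) → (Fin n → ℝ) → ℝ}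
    (hD : IsMixedPartials D) (y : Fin n → ℝ) :
    ‖D ∅ y‖ₑ ^ p ≤ ENNReal.ofReal (1 + p) ^ n * mixedNormPow p D := by
  induction n with
  | zero =>
    rw [pow_zero, one_mul]
    calc ‖D ∅ y‖ₑ ^ p = ∫⁻ z, ‖D ∅ z‖ₑ ^ p := by simp [Subsingleton.elim _ y, volume_pi]
      _ ≤ mixedNormPow p D :=
        Finset.single_le_sum (f := fun S => ∫⁻ z, ‖D S z‖ₑ ^ p) (fun _ _ => zero_le)
          (Finset.mem_univ ∅)
  | succ n ih =>
    have hg := hD.hasDerivAt_cons (Finset.notMem_empty 0) (Fin.tail y)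
    rw [Finset.insert_empty] at hg
    calc ‖D ∅ y‖ₑ ^ p = ‖D ∅ (Fin.cons (y 0) (Fin.tail y))‖ₑ ^ p := by rw [Fin.cons_self_tail]
      _ ≤ ENNReal.ofReal (1 + p) * ∫⁻ t, (‖D ∅ (Fin.cons t (Fin.tail y))‖ₑ ^ p +
            ‖D {0} (Fin.cons t (Fin.tail y))‖ₑ ^ p) :=
        enorm_rpow_le_lintegral_enorm_rpow_add hp hg
          ((hD.continuous _).comp (by fun_prop)) (y 0)
      _ ≤ ENNReal.ofReal (1 + p) * (ENNReal.ofReal (1 + p) ^ n * mixedNormPow p D) := by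
        gcongr
        exact lintegral_enorm_rpow_cons_add_le (by simp) (fun D' hD' => ih hD') hD _
      _ = ENNReal.ofReal (1 + p) ^ (n + 1) * mixedNormPow p D := by ring

lemma mixedNormPow_mixedSlice_empty_le (hp : 1 < p)
    {D : Finset (Fin (n + 1)) → (Fin (n + 1) → ℝ) → ℝ} (hD : IsMixedPartials D) (s : ℝ) :
    mixedNormPow p (mixedSlice D ∅ s) ≤ ENNReal.ofReal (1 + p) * mixedNormPow p D := by
  have hmeas : ∀ S, Measurable fun y => ‖D S y‖ₑ ^ p :=
    fun S => (hD.continuous S).measurable.enorm.pow_const p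
  rw [mixedNormPow_fin_succ hD.continuous, Finset.mul_sum]
  refine Finset.sum_le_sum fun S _ => ?_
  have hF : Measurable fun y => ‖D (S.map (Fin.succEmb n)) y‖ₑ ^ p +
      ‖D (insert 0 (S.map (Fin.succEmb n))) y‖ₑ ^ p := (hmeas _).add (hmeas _)
  rw [lintegral_fin_succ_cons_swap hF, ← lintegral_const_mul' _ _ (by simp)]
  refine lintegral_mono fun z => ?_
  have h0 : (0 : Fin (n + 1)) ∉ S.map (Fin.succEmb n) := by simp [Fin.succ_ne_zero]
  simpa [mixedSlice] using enorm_rpow_le_lintegral_enorm_rpow_add hp (hD.hasDerivAt_cons h0 z)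
    ((hD.continuous _).comp (by fun_prop)) s

lemma IsMixedPartials.enorm_sub_cons_le (hp : 1 < p)
    {D : Finset (Fin (n + 1)) → (Fin (n + 1) → ℝ) → ℝ} (hD : IsMixedPartials D) (a b : ℝ)
    (z : Fin n → ℝ) :
    ‖D ∅ (Fin.cons a z) - D ∅ (Fin.cons b z)‖ₑ ≤
      ‖a - b‖ₑ ^ ((p - 1) / p) * (ENNReal.ofReal (1 + p) ^ n * mixedNormPow p D) ^ (1 / p) := by
  have hg := hD.hasDerivAt_cons (Finset.notMem_empty 0) z
  rw [Finset.insert_empty] at hg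
  have hg' : Continuous fun t => D {0} (Fin.cons t z) := (hD.continuous _).comp (by fun_prop)
  have hint : ∫⁻ t, ‖D {0} (Fin.cons t z)‖ₑ ^ p ≤ ENNReal.ofReal (1 + p) ^ n * mixedNormPow p D :=
    (lintegral_mono fun t => le_add_self).trans
      (lintegral_enorm_rpow_cons_add_le (by simp) (fun D' hD' => hD'.enorm_rpow_le hp) hD z)
  calc ‖D ∅ (Fin.cons a z) - D ∅ (Fin.cons b z)‖ₑ
      ≤ ∫⁻ t in Set.uIcc b a, ‖D {0} (Fin.cons t z)‖ₑ := by
        simpa [funext fun t => (hg t).deriv] using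
          enorm_sub_le_setLIntegral_uIcc_enorm_deriv (contDiff_one_of_hasDerivAt hg hg') b a
    _ ≤ (∫⁻ t in Set.uIcc b a, ‖D {0} (Fin.cons t z)‖ₑ ^ p) ^ (1 / p) *
          volume (Set.uIcc b a) ^ ((p - 1) / p) := by
        simpa using lintegral_enorm_le_lintegral_enorm_rpow (μ := volume.restrict (Set.uIcc b a))
          hp.le hg'.aestronglyMeasurable
    _ ≤ (ENNReal.ofReal (1 + p) ^ n * mixedNormPow p D) ^ (1 / p) * ‖a - b‖ₑ ^ ((p - 1) / p) := by
        rw [Real.volume_interval, ← Real.enorm_eq_ofReal_abs]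
        gcongr
        exact (setLIntegral_le_lintegral _ _).trans hint
    _ = _ := mul_comm _ _

theorem IsMixedPartials.enorm_sub_add_le (hp : 1 < p) {D : Finset (Fin n) → (Fin n → ℝ) → ℝ}
    (hD : IsMixedPartials D) (x x' : Fin n → ℝ) :
    ‖D ∅ x - D ∅ x'‖ₑ + (ENNReal.ofReal (1 + p) ^ (1 / p)) ^ n * mixedNormPow p D ^ (1 / p) ≤
      (∏ i, (ENNReal.ofReal (1 + p) ^ (1 / p) + ‖x i - x' i‖ₑ ^ ((p - 1) / p))) *
        mixedNormPow p D ^ (1 / p) := by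
  induction n with
  | zero => simp [Subsingleton.elim x x']
  | succ n ih =>
    set A := ENNReal.ofReal (1 + p) ^ (1 / p)
    set N := mixedNormPow p D ^ (1 / p)
    set P := ∏ i : Fin n, (A + ‖Fin.tail x i - Fin.tail x' i‖ₑ ^ ((p - 1) / p))
    set y := (Fin.cons (x' 0) (Fin.tail x) : Fin (n + 1) → ℝ)
    have hp0 : 0 ≤ 1 / p := by positivity
    have hAP : A ^ n ≤ P :=
      calc A ^ n = ∏ _i : Fin n, A := by simp
        _ ≤ P := Finset.prod_le_prod' fun _ _ => le_self_add
    have hpow : (ENNReal.ofReal (1 + p) ^ n * mixedNormPow p D) ^ (1 / p) = A ^ n * N := by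
      rw [ENNReal.mul_rpow_of_nonneg _ _ hp0, ENNReal.pow_rpow_comm]
    have hN : mixedNormPow p (mixedSlice D ∅ (x' 0)) ^ (1 / p) ≤ A * N := by
      rw [← ENNReal.mul_rpow_of_nonneg _ _ hp0]
      gcongr
      exact mixedNormPow_mixedSlice_empty_le hp hD _
    have h1 : ‖D ∅ x - D ∅ y‖ₑ ≤ ‖x 0 - x' 0‖ₑ ^ ((p - 1) / p) * (A ^ n * N) := by
      simpa only [hpow, Fin.cons_self_tail] using hD.enorm_sub_cons_le hp (x 0) (x' 0) (Fin.tail x)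
    have h2 : ‖D ∅ y - D ∅ x'‖ₑ + A ^ n * (A * N) ≤ P * (A * N) := by
      refine add_mul_le_mul_of_le_of_le ?_ hAP hN
      simpa [mixedSlice, Fin.cons_self_tail] using
        ih (hD.slice (Finset.empty_subset _) (x' 0)) (Fin.tail x) (Fin.tail x')
    calc ‖D ∅ x - D ∅ x'‖ₑ + A ^ (n + 1) * N
        ≤ ‖D ∅ x - D ∅ y‖ₑ + (‖D ∅ y - D ∅ x'‖ₑ + A ^ n * (A * N)) := by
          rw [← add_assoc, ← sub_add_sub_cancel (D ∅ x) (D ∅ y), pow_succ, mul_assoc]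
          gcongr
          exact enorm_add_le _ _
      _ ≤ ‖x 0 - x' 0‖ₑ ^ ((p - 1) / p) * (A ^ n * N) + P * (A * N) := add_le_add h1 h2
      _ ≤ ‖x 0 - x' 0‖ₑ ^ ((p - 1) / p) * (P * N) + P * (A * N) := by gcongr
      _ = (∏ i, (A + ‖x i - x' i‖ₑ ^ ((p - 1) / p))) * N := by
          rw [Fin.prod_univ_succ]
          change _ = (A + _) * P * N
          ring

lemma enorm_rpow_eq_ofReal_abs_rpow (hp : 0 ≤ p) (a : ℝ) :
    ‖a‖ₑ ^ p = ENNReal.ofReal (|a| ^ p) := by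
  rw [Real.enorm_eq_ofReal_abs, ENNReal.ofReal_rpow_of_nonneg (abs_nonneg a) hp]

lemma mixedNormPow_eq_ofReal {ι : Type*} [Fintype ι] (hp : 0 ≤ p)
    {D : Finset ι → (ι → ℝ) → ℝ} (hD : ∀ S, Integrable fun y => |D S y| ^ p) :
    mixedNormPow p D = ENNReal.ofReal (∑ S, ∫ y, |D S y| ^ p) := by
  rw [ENNReal.ofReal_sum_of_nonneg fun S _ => integral_nonneg fun y => by positivity]
  refine Finset.sum_congr rfl fun S _ => ?_
  rw [ofReal_integral_eq_lintegral_ofReal (hD S)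
    (Filter.Eventually.of_forall fun y => by positivity)]
  simp only [enorm_rpow_eq_ofReal_abs_rpow hp]

theorem IsMixedPartials.abs_sub_le (hp : 1 < p) {D : Finset (Fin n) → (Fin n → ℝ) → ℝ}
    (hD : IsMixedPartials D) (hint : ∀ S, Integrable fun y => |D S y| ^ p) (x x' : Fin n → ℝ) :
    |D ∅ x - D ∅ x'| ≤
      (∏ i, ((1 + p) ^ (1 / p) + |x i - x' i| ^ ((p - 1) / p)) - ((1 + p) ^ (1 / p)) ^ n) *
        (∑ S, ∫ y, |D S y| ^ p) ^ (1 / p) := by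
  have hp0 : 0 ≤ p := by linarith
  have hp' : 0 ≤ 1 / p := by positivity
  have hβ : 0 ≤ (p - 1) / p := div_nonneg (by linarith) hp0
  have hI : 0 ≤ ∑ S, ∫ y, |D S y| ^ p :=
    Finset.sum_nonneg fun S _ => integral_nonneg fun y => by positivity
  have h := hD.enorm_sub_add_le hp x x'
  simp only [enorm_rpow_eq_ofReal_abs_rpow hβ] at h
  simp only [mixedNormPow_eq_ofReal hp0 hint, Real.enorm_eq_ofReal_abs,
    ENNReal.ofReal_rpow_of_nonneg (by linarith : (0 : ℝ) ≤ 1 + p) hp',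
    ENNReal.ofReal_rpow_of_nonneg hI hp'] at h
  rw [← ENNReal.ofReal_pow (by positivity), ← ENNReal.ofReal_mul (by positivity),
    ← ENNReal.ofReal_add (by positivity) (by positivity),
    Finset.prod_congr rfl fun i _ => (ENNReal.ofReal_add (p := (1 + p) ^ (1 / p))
      (q := |x i - x' i| ^ ((p - 1) / p)) (by positivity) (by positivity)).symm,
    ← ENNReal.ofReal_prod_of_nonneg fun i _ => by positivity, ← ENNReal.ofReal_mul (by positivity),
    ENNReal.ofReal_le_ofReal_iff (by positivity)] at h
  rw [sub_mul]
  linarith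

lemma abs_sub_le_euclDist (x y : Fin n → ℝ) (i : Fin n) : |x i - y i| ≤ euclDist x y := by
  rw [euclDist, ← Real.sqrt_sq_eq_abs]
  exact Real.sqrt_le_sqrt (Finset.single_le_sum (f := fun j => (x j - y j) ^ 2)
    (fun j _ => sq_nonneg _) (Finset.mem_univ i))

/-- **Pointwise oscillation estimate for smooth functions in `S_p^1(ℝⁿ)`, `1 < p < ∞`.**
If `u` is Cⁿ on ℝⁿ (its mixed partials with distinct indices encoded by `D`, with
`D ∅ = u`), and all mixed partials `D S` lie in `Lᵖ(ℝⁿ)`, then for all `x, x' ∈ ℝⁿ`: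
`|u(x) − u(x')| ≤ [((1+p)^{1/p} + |x−x'|^{(p−1)/p})ⁿ − (1+p)^{n/p}] ‖u‖_{S_p^1(ℝⁿ)}`,
where `‖u‖_{S_p^1} = (Σ_S ‖D S‖_{Lᵖ}ᵖ)^{1/p}` (the sum running over all subsets `S`,
`S = ∅` giving the `‖u‖_{Lᵖ}ᵖ` term) and `|x − x'|` is the Euclidean distance. -/
theorem oscillation_estimate_Sp1 {n : ℕ} (p : ℝ) (hp : 1 < p)
    (u : (Fin n → ℝ) → ℝ)
    (D : Finset (Fin n) → (Fin n → ℝ) → ℝ)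
    (hD0 : D ∅ = u)
    (hDderiv : ∀ (S : Finset (Fin n)) (i : Fin n), i ∉ S → ∀ η : Fin n → ℝ,
      HasDerivAt (fun t => D S (Function.update η i t)) (D (insert i S) η) (η i))
    (hDcont : ∀ S, Continuous (D S))
    (hDLp : ∀ S : Finset (Fin n), Integrable (fun y => |D S y| ^ p))
    (x x' : Fin n → ℝ) :
    |u x - u x'| ≤
      (((1 + p) ^ (1 / p) + euclDist x x' ^ ((p - 1) / p)) ^ n - (1 + p) ^ ((n : ℝ) / p)) *
        (∑ S : Finset (Fin n), ∫ y, |D S y| ^ p) ^ (1 / p) := by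
  subst hD0
  have hprod : ∏ i, ((1 + p) ^ (1 / p) + |x i - x' i| ^ ((p - 1) / p)) ≤
      ((1 + p) ^ (1 / p) + euclDist x x' ^ ((p - 1) / p)) ^ n :=
    calc _ ≤ ∏ _i : Fin n, ((1 + p) ^ (1 / p) + euclDist x x' ^ ((p - 1) / p)) :=
          Finset.prod_le_prod (fun i _ => by positivity) fun i _ => by
            gcongr; exact abs_sub_le_euclDist x x' i
      _ = _ := by simp
  have hpow : ((1 + p) ^ (1 / p)) ^ n = (1 + p) ^ ((n : ℝ) / p) := by
    rw [← Real.rpow_natCast, ← Real.rpow_mul (by linarith)]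
    ring_nf
  calc |D ∅ x - D ∅ x'|
      ≤ (∏ i, ((1 + p) ^ (1 / p) + |x i - x' i| ^ ((p - 1) / p)) - ((1 + p) ^ (1 / p)) ^ n) *
          (∑ S, ∫ y, |D S y| ^ p) ^ (1 / p) :=
        IsMixedPartials.abs_sub_le hp ⟨hDderiv, hDcont⟩ hDLp x x'
    _ ≤ _ := by
        rw [hpow]
        gcongr
end

section
/- Let n ∈ ℕ. For any u ∈ S_1^1(ℝⁿ) ∩ Cⁿ_loc(ℝⁿ) and any x, x' ∈ ℝⁿ: |u(x) − u(x')| ≤ (3ⁿ − 2ⁿ) ‖u‖_{S_1^1(ℝⁿ)}. -/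
open MeasureTheory Finset
open scoped ENNReal

theorem enorm_sub_le_setLIntegral_Icc_of_hasDerivAt {f f' : ℝ → ℝ}
    (hf : ∀ s, HasDerivAt f (f' s) s) (hf' : Continuous f') {a b : ℝ} (hab : a ≤ b) :
    ‖f b - f a‖ₑ ≤ ∫⁻ s in Set.Icc a b, ‖f' s‖ₑ := by
  have hderiv : deriv f = f' := funext fun s => (hf s).deriv
  have hC1 : ContDiff ℝ 1 f :=
    contDiff_one_iff_deriv.2 ⟨fun s => (hf s).differentiableAt, hderiv ▸ hf'⟩
  simpa only [hderiv] using enorm_sub_le_lintegral_deriv_of_contDiffOn_Icc hC1.contDiffOn hab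

theorem enorm_le_setLIntegral_Icc_add_of_hasDerivAt {f f' : ℝ → ℝ}
    (hf : ∀ s, HasDerivAt f (f' s) s) (hf' : Continuous f') (a : ℝ) :
    ‖f a‖ₑ ≤ (∫⁻ s in Set.Icc a (a + 1), ‖f s‖ₑ) + ∫⁻ s in Set.Icc a (a + 1), ‖f' s‖ₑ := by
  set I := Set.Icc a (a + 1)
  have hI : volume I = 1 := by simp [I, Real.volume_Icc]
  have hpt : ∀ s ∈ I, ‖f a‖ₑ ≤ ‖f s‖ₑ + ∫⁻ r in I, ‖f' r‖ₑ := fun s hs =>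
    calc ‖f a‖ₑ = ‖f s - (f s - f a)‖ₑ := by rw [sub_sub_cancel]
      _ ≤ ‖f s‖ₑ + ‖f s - f a‖ₑ := enorm_sub_le
      _ ≤ ‖f s‖ₑ + ∫⁻ r in Set.Icc a s, ‖f' r‖ₑ := by
        gcongr; exact enorm_sub_le_setLIntegral_Icc_of_hasDerivAt hf hf' hs.1
      _ ≤ ‖f s‖ₑ + ∫⁻ r in I, ‖f' r‖ₑ := by
        gcongr; exact Set.Icc_subset_Icc_right hs.2
  calc ‖f a‖ₑ = ∫⁻ _ in I, ‖f a‖ₑ := by rw [setLIntegral_const, hI, mul_one]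
    _ ≤ ∫⁻ s in I, (‖f s‖ₑ + ∫⁻ r in I, ‖f' r‖ₑ) := setLIntegral_mono' measurableSet_Icc hpt
    _ = (∫⁻ s in I, ‖f s‖ₑ) + ∫⁻ r in I, ‖f' r‖ₑ := by
      rw [lintegral_add_right _ measurable_const, setLIntegral_const, hI, mul_one]

theorem abs_le_sum_integral_abs_of_enorm_le {α κ : Type*} [MeasurableSpace α] {μ : Measure α}
    {s : Finset κ} {F : κ → α → ℝ} (hF : ∀ k ∈ s, Integrable (F k) μ) {a : ℝ}
    (h : ‖a‖ₑ ≤ ∑ k ∈ s, ∫⁻ y, ‖F k y‖ₑ ∂μ) :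
    |a| ≤ ∑ k ∈ s, ∫ y, |F k y| ∂μ := by
  have hnonneg : ∀ k ∈ s, 0 ≤ ∫ y, |F k y| ∂μ := fun k _ => integral_nonneg fun y => abs_nonneg _
  have hlint : ∀ k ∈ s, ∫⁻ y, ‖F k y‖ₑ ∂μ = ENNReal.ofReal (∫ y, |F k y| ∂μ) := fun k hk => by
    simpa only [Real.norm_eq_abs] using (ofReal_integral_norm_eq_lintegral_enorm (hF k hk)).symm
  rw [sum_congr rfl hlint, ← ENNReal.ofReal_sum_of_nonneg hnonneg, Real.enorm_eq_ofReal_abs] at h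
  exact (ENNReal.ofReal_le_ofReal_iff (sum_nonneg hnonneg)).1 h

theorem lmarginal_add {δ : Type*} {X : δ → Type*} [∀ i, MeasurableSpace (X i)] [DecidableEq δ]
    {μ : ∀ i, Measure (X i)} {f g : (∀ i, X i) → ℝ≥0∞} (hf : Measurable f) (s : Finset δ) :
    ∫⋯∫⁻_s, (f + g) ∂μ = (∫⋯∫⁻_s, f ∂μ) + ∫⋯∫⁻_s, g ∂μ := by
  ext x
  exact lintegral_add_left (hf.comp measurable_updateFinset) _

theorem two_le_three_pow_sub_two_pow {n : ℕ} (hn : 2 ≤ n) : (2 : ℝ) ≤ 3 ^ n - 2 ^ n := by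
  obtain ⟨m, rfl⟩ : ∃ m, n = m + 2 := ⟨n - 2, by omega⟩
  have h2 : (1 : ℝ) ≤ 2 ^ m := one_le_pow₀ (by norm_num)
  have h3 : (2 : ℝ) ^ m ≤ 3 ^ m := pow_le_pow_left₀ (by norm_num) (by norm_num) m
  rw [pow_add, pow_add]
  linarith

structure IsMixedPartials_s9 {ι : Type*} [DecidableEq ι] (D : Finset ι → (ι → ℝ) → ℝ) : Prop where
  hasDerivAt : ∀ (S : Finset ι) (i : ι), i ∉ S → ∀ η : ι → ℝ,
    HasDerivAt (fun t => D S (Function.update η i t)) (D (insert i S) η) (η i)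
  continuous : ∀ S, Continuous (D S)

/-- Its product over `i` is Lebesgue measure on the unit cube with lowest corner `z`. -/
noncomputable def unitCubeMeasure {ι : Type*} (z : ι → ℝ) (i : ι) : Measure ℝ :=
  volume.restrict (Set.Icc (z i) (z i + 1))

instance {ι : Type*} (z : ι → ℝ) (i : ι) : SigmaFinite (unitCubeMeasure z i) := by
  unfold unitCubeMeasure; infer_instance

theorem pi_unitCubeMeasure_le_volume {ι : Type*} [Fintype ι] (z : ι → ℝ) :
    Measure.pi (unitCubeMeasure z) ≤ volume :=
  (Measure.restrict_pi_pi (fun _ => volume) _).symm.trans_le Measure.restrict_le_self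

namespace IsMixedPartials_s9

variable {ι : Type*} [DecidableEq ι] {D : Finset ι → (ι → ℝ) → ℝ}

theorem enorm_update_le (hD : IsMixedPartials_s9 D) {S : Finset ι} {j : ι} (hj : j ∉ S)
    (z x : ι → ℝ) :
    ‖D S (Function.update x j (z j))‖ₑ ≤
      (∫⋯∫⁻_{j}, (‖D S ·‖ₑ) ∂unitCubeMeasure z) x +
        (∫⋯∫⁻_{j}, (‖D (insert j S) ·‖ₑ) ∂unitCubeMeasure z) x := by
  have hderiv : ∀ s, HasDerivAt (fun t => D S (Function.update x j t))
      (D (insert j S) (Function.update x j s)) s := fun s => by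
    simpa using hD.hasDerivAt S j hj (Function.update x j s)
  simpa only [lmarginal_singleton, unitCubeMeasure] using
    enorm_le_setLIntegral_Icc_add_of_hasDerivAt hderiv
      ((hD.continuous _).comp (continuous_const.update j continuous_id)) (z j)

variable [Fintype ι]

theorem measurable_enorm (hD : IsMixedPartials_s9 D) (S : Finset ι) :
    Measurable fun y => ‖D S y‖ₑ :=
  (hD.continuous S).measurable.enorm

theorem lmarginal_le_lmarginal_insert_add (hD : IsMixedPartials_s9 D) {S T : Finset ι} {j : ι}
    (hjS : j ∉ S) (hjT : j ∉ T) (z : ι → ℝ) :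
    (∫⋯∫⁻_T, (‖D S ·‖ₑ) ∂unitCubeMeasure z) z ≤
      (∫⋯∫⁻_insert j T, (‖D S ·‖ₑ) ∂unitCubeMeasure z) z +
        (∫⋯∫⁻_insert j T, (‖D (insert j S) ·‖ₑ) ∂unitCubeMeasure z) z := by
  calc (∫⋯∫⁻_T, (‖D S ·‖ₑ) ∂unitCubeMeasure z) z
      = (∫⋯∫⁻_T, (‖D S ·‖ₑ) ∘ (Function.update · j (z j)) ∂unitCubeMeasure z) z := by
        simpa using lmarginal_update_of_notMem (hD.measurable_enorm S) hjT z (z j)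
    _ ≤ (∫⋯∫⁻_T, ((∫⋯∫⁻_{j}, (‖D S ·‖ₑ) ∂unitCubeMeasure z) +
          ∫⋯∫⁻_{j}, (‖D (insert j S) ·‖ₑ) ∂unitCubeMeasure z) ∂unitCubeMeasure z) z :=
        lmarginal_mono (fun x => hD.enorm_update_le hjS z x) z
    _ = _ := by
        rw [lmarginal_add ((hD.measurable_enorm S).lmarginal _) T,
          lmarginal_insert' _ (hD.measurable_enorm S) hjT,
          lmarginal_insert' _ (hD.measurable_enorm _) hjT]
        simp only [Pi.add_apply, lmarginal_singleton]

theorem enorm_le_sum_powerset_lmarginal (hD : IsMixedPartials_s9 D) (z : ι → ℝ) (T : Finset ι) :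
    ‖D ∅ z‖ₑ ≤ ∑ S ∈ T.powerset, (∫⋯∫⁻_T, (‖D S ·‖ₑ) ∂unitCubeMeasure z) z := by
  induction T using Finset.induction_on with
  | empty => simp
  | @insert j T hjT ih =>
    calc ‖D ∅ z‖ₑ ≤ ∑ S ∈ T.powerset, (∫⋯∫⁻_T, (‖D S ·‖ₑ) ∂unitCubeMeasure z) z := ih
      _ ≤ ∑ S ∈ T.powerset, ((∫⋯∫⁻_insert j T, (‖D S ·‖ₑ) ∂unitCubeMeasure z) z +
            (∫⋯∫⁻_insert j T, (‖D (insert j S) ·‖ₑ) ∂unitCubeMeasure z) z) :=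
        sum_le_sum fun S hS => hD.lmarginal_le_lmarginal_insert_add
          (fun hj => hjT (mem_powerset.1 hS hj)) hjT z
      _ = ∑ S ∈ (insert j T).powerset, (∫⋯∫⁻_insert j T, (‖D S ·‖ₑ) ∂unitCubeMeasure z) z := by
        rw [sum_powerset_insert hjT, sum_add_distrib]

theorem enorm_le_sum_lintegral (hD : IsMixedPartials_s9 D) (z : ι → ℝ) :
    ‖D ∅ z‖ₑ ≤ ∑ S, ∫⁻ y, ‖D S y‖ₑ := by
  have h := hD.enorm_le_sum_powerset_lmarginal z univ
  rw [powerset_univ] at h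
  refine h.trans (sum_le_sum fun S _ => ?_)
  rw [lmarginal_univ]
  exact lintegral_mono' (pi_unitCubeMeasure_le_volume z) le_rfl

theorem enorm_sub_le_lintegral_of_unique [Unique ι] (hD : IsMixedPartials_s9 D) (x x' : ι → ℝ) :
    ‖D ∅ x - D ∅ x'‖ₑ ≤ ∫⁻ y, ‖D {default} y‖ₑ := by
  set e := (MeasurableEquiv.funUnique ι ℝ).symm
  have he : MeasurePreserving e := by
    obtain rfl : ‹Fintype ι› = Unique.fintype := Subsingleton.elim _ _
    exact (volume_preserving_funUnique ι ℝ).symm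
  have hupdate : ∀ r s, Function.update (e r) default s = e s := fun r s =>
    funext fun i => by simp [Unique.eq_default i, e]
  have heval : ∀ s, e s default = s := fun s => by simp [e]
  have hderiv : ∀ s, HasDerivAt (D ∅ ∘ e) (D {default} (e s)) s := fun s => by
    simpa [Function.comp_def, hupdate, heval] using
      hD.hasDerivAt ∅ default (notMem_empty _) (e s)
  have hcont : Continuous (D {default} ∘ e) :=
    (hD.continuous _).comp (continuous_pi fun _ => continuous_id)
  have hbound : ∀ a b, a ≤ b → ‖D ∅ (e b) - D ∅ (e a)‖ₑ ≤ ∫⁻ y, ‖D {default} y‖ₑ :=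
    fun a b hab => calc
      _ ≤ ∫⁻ s in Set.Icc a b, ‖D {default} (e s)‖ₑ :=
        enorm_sub_le_setLIntegral_Icc_of_hasDerivAt hderiv hcont hab
      _ ≤ ∫⁻ s, ‖D {default} (e s)‖ₑ := setLIntegral_le_lintegral _ _
      _ = ∫⁻ y, ‖D {default} y‖ₑ :=
        he.lintegral_comp_emb e.measurableEmbedding (fun y => ‖D {default} y‖ₑ)
  obtain ⟨a, rfl⟩ := e.surjective x
  obtain ⟨b, rfl⟩ := e.surjective x'
  rcases le_total b a with hba | hab
  · exact hbound b a hba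
  · rw [enorm_sub_rev]; exact hbound a b hab

end IsMixedPartials_s9

/-- **Pointwise oscillation estimate for smooth functions in `S_1^1(ℝⁿ)`.**
If `u` is Cⁿ on ℝⁿ (its mixed partials with distinct indices encoded by `D`, with
`D ∅ = u`), and all mixed partials `D S` lie in `L¹(ℝⁿ)`, then for all `x, x' ∈ ℝⁿ`:
`|u(x) − u(x')| ≤ (3ⁿ − 2ⁿ) ‖u‖_{S_1^1(ℝⁿ)}`, where `‖u‖_{S_1^1}` is the sum of the
`L¹` norms of `u` and of all its distinct-index mixed derivatives. -/
theorem oscillation_estimate_S11 {n : ℕ}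
    (u : (Fin n → ℝ) → ℝ)
    (D : Finset (Fin n) → (Fin n → ℝ) → ℝ)
    (hD0 : D ∅ = u)
    (hDderiv : ∀ (S : Finset (Fin n)) (i : Fin n), i ∉ S → ∀ η : Fin n → ℝ,
      HasDerivAt (fun t => D S (Function.update η i t)) (D (insert i S) η) (η i))
    (hDcont : ∀ S, Continuous (D S))
    (hDL1 : ∀ S : Finset (Fin n), Integrable (D S))
    (x x' : Fin n → ℝ) :
    |u x - u x'| ≤
      ((3 : ℝ) ^ n - 2 ^ n) * ∑ S : Finset (Fin n), ∫ y, |D S y| := by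
  subst hD0
  have hD : IsMixedPartials_s9 D := ⟨hDderiv, hDcont⟩
  have hL1 : ∀ S ∈ (univ : Finset (Finset (Fin n))), Integrable (D S) := fun S _ => hDL1 S
  obtain rfl | rfl | hn : n = 0 ∨ n = 1 ∨ 2 ≤ n := by omega
  · simp [Subsingleton.elim x x']
  · have h := hD.enorm_sub_le_lintegral_of_unique x x'
    rw [show (3 : ℝ) ^ 1 - 2 ^ 1 = 1 by norm_num, one_mul]
    exact abs_le_sum_integral_abs_of_enorm_le hL1
      (h.trans (single_le_sum (f := fun S => ∫⁻ y, ‖D S y‖ₑ) (by simp) (mem_univ {0})))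
  · have hnorm : 0 ≤ ∑ S : Finset (Fin n), ∫ y, |D S y| :=
      sum_nonneg fun S _ => integral_nonneg fun y => abs_nonneg _
    have hx := abs_le_sum_integral_abs_of_enorm_le hL1 (hD.enorm_le_sum_lintegral x)
    have hx' := abs_le_sum_integral_abs_of_enorm_le hL1 (hD.enorm_le_sum_lintegral x')
    calc |D ∅ x - D ∅ x'| ≤ |D ∅ x| + |D ∅ x'| := abs_sub _ _
      _ ≤ 2 * ∑ S : Finset (Fin n), ∫ y, |D S y| := by linarith
      _ ≤ _ := mul_le_mul_of_nonneg_right (two_le_three_pow_sub_two_pow hn) hnorm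
end

section
/- Let 1 < p < ∞, n ∈ ℕ, 1 ≤ k ≤ n, and let u ∈ S_p^1(ℝⁿ) ∩ Cⁿ_loc(ℝⁿ). For any k-rectangle face P_{i_1...i_k} of an n-rectangle P with bottom corner x and top corner x', the trace integral satisfies |∫_{P_{i_1...i_k}} ∂^k u/∂x_{i_1}⋯∂x_{i_k} dη| ≤ |x − x'|^{k(p−1)/p} (1+p)^{(n−k)/p} ‖u‖_{S_p^1(ℝⁿ)}. -/
open MeasureTheory Finset

open Function in
/-- One-dimensional trace inequality: for a `C¹` function `g` on `ℝ`,
`|g a|ᵖ ≤ ∫ ((p-1)|g|ᵖ + |g'|ᵖ)`. -/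
lemma trace1D {p : ℝ} (hp : 1 < p) {g g' : ℝ → ℝ}
    (hg : ∀ t, HasDerivAt g (g' t) t) (hg'c : Continuous g') (a : ℝ) :
    ENNReal.ofReal (|g a| ^ p) ≤
      ∫⁻ t, ENNReal.ofReal ((p - 1) * |g t| ^ p + |g' t| ^ p) := by
  have hp0 : (0:ℝ) < p := lt_trans zero_lt_one hp
  have hgc : Continuous g := by
    rw [continuous_iff_continuousAt]; exact fun t => (hg t).continuousAt
  set h : ℝ → ℝ := fun t => (p - 1) * |g t| ^ p + |g' t| ^ p with hh_def
  have hhc : Continuous h := by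
    refine Continuous.add (continuous_const.mul ?_) ?_
    · exact (hgc.abs).rpow_const fun t => Or.inr hp0.le
    · exact (hg'c.abs).rpow_const fun t => Or.inr hp0.le
  have hhpos : ∀ t, 0 ≤ h t := by
    intro t
    show (0:ℝ) ≤ (p - 1) * |g t| ^ p + |g' t| ^ p
    have h1 : (0:ℝ) ≤ |g t| ^ p := Real.rpow_nonneg (abs_nonneg _) _
    have h2 : (0:ℝ) ≤ |g' t| ^ p := Real.rpow_nonneg (abs_nonneg _) _
    nlinarith
  set φ : ℝ → ℝ := fun t => |g t| ^ p with hφ_def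
  set φ' : ℝ → ℝ := fun t => (p * |g t| ^ (p - 2) * g t) * g' t with hφ'_def
  have hφ : ∀ t, HasDerivAt φ (φ' t) t :=
    fun t => (hasDerivAt_abs_rpow (g t) hp).comp t (hg t)
  have hpq : p.HolderConjugate (Real.conjExponent p) := Real.HolderConjugate.conjExponent hp
  set q := Real.conjExponent p with hq_def
  have hb : ∀ t, |φ' t| ≤ h t := by
    intro t
    have key : |φ' t| ≤ p * |g t| ^ (p - 1) * |g' t| := by
      have e : |φ' t| = p * (|g t| ^ (p - 2) * |g t|) * |g' t| := by
        simp only [hφ'_def, abs_mul, abs_of_nonneg hp0.le,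
          abs_of_nonneg (Real.rpow_nonneg (abs_nonneg (g t)) (p - 2)), abs_abs]
        ring
      rw [e]
      rcases eq_or_ne (g t) 0 with h0 | h0
      · simp [h0, Real.zero_rpow (by intro hh; nlinarith : p - 1 ≠ 0)]
      · rw [← Real.rpow_add_one (abs_ne_zero.2 h0)]
        ring_nf
        exact le_refl _
    refine le_trans key ?_
    have ha : (0:ℝ) ≤ |g t| ^ (p - 1) := Real.rpow_nonneg (abs_nonneg _) _
    have hy := Real.young_inequality_of_nonneg ha (abs_nonneg (g' t)) hpq.symm
    have e1 : (|g t| ^ (p - 1)) ^ q = |g t| ^ p := by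
      rw [← Real.rpow_mul (abs_nonneg _), hpq.sub_one_mul_conj]
    rw [e1] at hy
    have hq0 : (0:ℝ) < q := hpq.symm.pos
    have e2 : p / q = p - 1 := hpq.div_conj_eq_sub_one
    have : p * (|g t| ^ (p - 1) * |g' t|) ≤ p * (|g t| ^ p / q + |g' t| ^ p / p) :=
      mul_le_mul_of_nonneg_left hy hp0.le
    have e3 : p * (|g t| ^ p / q + |g' t| ^ p / p) = (p / q) * |g t| ^ p + |g' t| ^ p := by
      field_simp
    rw [e3, e2] at this
    calc p * |g t| ^ (p - 1) * |g' t| = p * (|g t| ^ (p - 1) * |g' t|) := by ring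
      _ ≤ (p - 1) * |g t| ^ p + |g' t| ^ p := this
  set I := ∫⁻ t, ENNReal.ofReal (h t) with hI_def
  by_cases hI : I = ⊤
  · rw [hI]; exact le_top
  have key : ∀ ε : ℝ, 0 < ε → φ a ≤ I.toReal + ε := by
    intro ε hε
    have hex : ∃ b, a ≤ b ∧ |g b| ^ p ≤ ε := by
      by_contra hcon
      push_neg at hcon
      apply hI
      have hle : ∫⁻ t in Set.Ici a, ENNReal.ofReal ((p - 1) * ε) ∂volume ≤ I := by
        refine le_trans (setLIntegral_mono hhc.measurable.ennreal_ofReal ?_)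
          (setLIntegral_le_lintegral _ _)
        intro t ht
        apply ENNReal.ofReal_le_ofReal
        show (p - 1) * ε ≤ (p - 1) * |g t| ^ p + |g' t| ^ p
        have h1 := (hcon t ht).le
        have h2 : (0:ℝ) ≤ |g' t| ^ p := Real.rpow_nonneg (abs_nonneg _) _
        nlinarith
      rw [setLIntegral_const, Real.volume_Ici, ENNReal.mul_top] at hle
      · exact top_le_iff.mp hle
      · exact (ENNReal.ofReal_pos.2 (by nlinarith)).ne'
    obtain ⟨b, hab, hbε⟩ := hex
    have hmeasφ' : Measurable φ' := by
      have : φ' = deriv φ := funext fun t => ((hφ t).deriv).symm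
      rw [this]; exact measurable_deriv φ
    have hih : IntervalIntegrable h volume a b := hhc.intervalIntegrable a b
    have hiφ' : IntervalIntegrable φ' volume a b := by
      refine hih.mono_fun hmeasφ'.aestronglyMeasurable (ae_of_all _ fun t => ?_)
      simp only [Real.norm_eq_abs]
      rw [abs_of_nonneg (hhpos t)]
      exact hb t
    have hFTC : ∫ t in a..b, φ' t = φ b - φ a :=
      intervalIntegral.integral_eq_sub_of_hasDerivAt (fun t _ => hφ t) hiφ'
    have habs : |∫ t in a..b, φ' t| ≤ ∫ t in a..b, |φ' t| :=
      intervalIntegral.abs_integral_le_integral_abs hab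
    have hmono : ∫ t in a..b, |φ' t| ≤ ∫ t in a..b, h t := by
      refine intervalIntegral.integral_mono_on hab hiφ'.abs hih fun t _ => hb t
    have hIt : ∫ t in a..b, h t ≤ I.toReal := by
      rw [intervalIntegral.integral_of_le hab]
      have heq : ENNReal.ofReal (∫ t in Set.Ioc a b, h t) = ∫⁻ t in Set.Ioc a b,
          ENNReal.ofReal (h t) :=
        ofReal_integral_eq_lintegral_ofReal hih.1 (ae_of_all _ fun t => hhpos t)
      have h2 : ∫⁻ t in Set.Ioc a b, ENNReal.ofReal (h t) ∂volume ≤ I :=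
        setLIntegral_le_lintegral _ _
      calc ∫ t in Set.Ioc a b, h t
          = (ENNReal.ofReal (∫ t in Set.Ioc a b, h t)).toReal :=
            (ENNReal.toReal_ofReal (integral_nonneg fun t => hhpos t)).symm
        _ = (∫⁻ t in Set.Ioc a b, ENNReal.ofReal (h t) ∂volume).toReal := by rw [heq]
        _ ≤ I.toReal := ENNReal.toReal_mono hI h2
    have : φ a ≤ φ b + ∫ t in a..b, h t := by
      have he : φ a = φ b - ∫ t in a..b, φ' t := by rw [hFTC]; ring
      rw [he]
      linarith [le_trans (le_trans (neg_le_abs (∫ t in a..b, φ' t)) habs) hmono]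
    calc φ a ≤ φ b + ∫ t in a..b, h t := this
      _ ≤ ε + I.toReal := add_le_add hbε hIt
      _ = I.toReal + ε := by ring
  have hfin : φ a ≤ I.toReal := le_of_forall_pos_le_add key
  calc ENNReal.ofReal (φ a) ≤ ENNReal.ofReal I.toReal := ENNReal.ofReal_le_ofReal hfin
    _ = I := ENNReal.ofReal_toReal hI

/-- `lmarginal` of a constant multiple. -/
lemma lmarginal_const_mul' {δ : Type*} [DecidableEq δ] {π : δ → Type*}
    [∀ i, MeasurableSpace (π i)] (μ : ∀ i, MeasureTheory.Measure (π i)) (s : Finset δ)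
    (c : ENNReal) {f : (∀ i, π i) → ENNReal} (hf : Measurable f) (x : ∀ i, π i) :
    (∫⋯∫⁻_s, (fun y => c * f y) ∂μ) x = c * (∫⋯∫⁻_s, f ∂μ) x := by
  rw [MeasureTheory.lmarginal, MeasureTheory.lmarginal]
  exact MeasureTheory.lintegral_const_mul _ (hf.comp measurable_updateFinset)

open Function in
/-- Single-coordinate step: bound a point value by an integral in the `j`-th coordinate. -/
lemma face_step1 {n : ℕ} {p : ℝ} (hp : 1 < p)
    (D : Finset (Fin n) → (Fin n → ℝ) → ℝ)
    (hDderiv : ∀ (T : Finset (Fin n)) (i : Fin n), i ∉ T → ∀ η : Fin n → ℝ,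
      HasDerivAt (fun t => D T (Function.update η i t)) (D (insert i T) η) (η i))
    (hDcont : ∀ T, Continuous (D T))
    (T : Finset (Fin n)) (j : Fin n) (hj : j ∉ T) (η : Fin n → ℝ) :
    ENNReal.ofReal (|D T η| ^ p) ≤ ENNReal.ofReal (1 + p) *
      ∫⁻ t, (ENNReal.ofReal (|D T (update η j t)| ^ p)
        + ENNReal.ofReal (|D (insert j T) (update η j t)| ^ p)) := by
  have hp0 : (0:ℝ) < p := lt_trans zero_lt_one hp
  set g : ℝ → ℝ := fun t => D T (update η j t) with hg_def
  set g' : ℝ → ℝ := fun t => D (insert j T) (update η j t) with hg'_def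
  have hupd : Continuous (fun t : ℝ => update η j t) := by
    apply continuous_pi; intro i
    by_cases h : i = j
    · subst h; simp only [Function.update_self]; exact continuous_id
    · simp only [Function.update_of_ne h]; exact continuous_const
  have hg : ∀ t, HasDerivAt g (g' t) t := by
    intro t
    have h := hDderiv T j hj (update η j t)
    simp only [Function.update_idem, Function.update_self] at h
    exact h
  have hg'c : Continuous g' := (hDcont _).comp hupd
  have h0 := trace1D hp hg hg'c (η j)
  have hga : g (η j) = D T η := by rw [hg_def]; simp [Function.update_eq_self]
  rw [hga] at h0
  refine le_trans h0 ?_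
  have hmeas1 : Measurable fun t : ℝ => ENNReal.ofReal (|g t| ^ p) :=
    (((hDcont T).comp hupd).abs.rpow_const fun _ => Or.inr hp0.le).measurable.ennreal_ofReal
  have hmeas2 : Measurable fun t : ℝ => ENNReal.ofReal (|g' t| ^ p) :=
    ((hg'c).abs.rpow_const fun _ => Or.inr hp0.le).measurable.ennreal_ofReal
  calc (∫⁻ t, ENNReal.ofReal ((p - 1) * |g t| ^ p + |g' t| ^ p))
      ≤ ∫⁻ t, ENNReal.ofReal ((1 + p) * (|g t| ^ p + |g' t| ^ p)) := by
        refine lintegral_mono fun t => ENNReal.ofReal_le_ofReal ?_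
        have h1 : (0:ℝ) ≤ |g t| ^ p := Real.rpow_nonneg (abs_nonneg _) _
        have h2 : (0:ℝ) ≤ |g' t| ^ p := Real.rpow_nonneg (abs_nonneg _) _
        nlinarith
    _ = ∫⁻ t, ENNReal.ofReal (1 + p) *
        (ENNReal.ofReal (|g t| ^ p) + ENNReal.ofReal (|g' t| ^ p)) := by
        refine lintegral_congr fun t => ?_
        rw [← ENNReal.ofReal_add (Real.rpow_nonneg (abs_nonneg _) _)
          (Real.rpow_nonneg (abs_nonneg _) _), ← ENNReal.ofReal_mul (by linarith)]
    _ = ENNReal.ofReal (1 + p) *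
        ∫⁻ t, (ENNReal.ofReal (|g t| ^ p) + ENNReal.ofReal (|g' t| ^ p)) :=
        lintegral_const_mul _ (hmeas1.add hmeas2)

open Function in
/-- Iterated step: bound a point value by the marginal integral over the coordinates in `F`. -/
lemma face_step2 {n : ℕ} {p : ℝ} (hp : 1 < p)
    (D : Finset (Fin n) → (Fin n → ℝ) → ℝ)
    (hDderiv : ∀ (T : Finset (Fin n)) (i : Fin n), i ∉ T → ∀ η : Fin n → ℝ,
      HasDerivAt (fun t => D T (Function.update η i t)) (D (insert i T) η) (η i))
    (hDcont : ∀ T, Continuous (D T))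
    (F T : Finset (Fin n)) (hFT : Disjoint F T) (η : Fin n → ℝ) :
    ENNReal.ofReal (|D T η| ^ p) ≤ ENNReal.ofReal (1 + p) ^ F.card *
      (∫⋯∫⁻_F, (fun ζ => ∑ R ∈ F.powerset, ENNReal.ofReal (|D (T ∪ R) ζ| ^ p))
        ∂(fun _ => (volume : Measure ℝ))) η := by
  have hp0 : (0:ℝ) < p := lt_trans zero_lt_one hp
  have hmeasf : ∀ (W : Finset (Fin n)),
      Measurable fun ζ : Fin n → ℝ => ENNReal.ofReal (|D W ζ| ^ p) := fun W =>
    ((hDcont W).abs.rpow_const fun _ => Or.inr hp0.le).measurable.ennreal_ofReal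
  induction F using Finset.induction_on with
  | empty => simp [lmarginal_empty]
  | @insert j F' hj IH =>
    have hjT : j ∉ T := fun h => Finset.disjoint_left.mp hFT (Finset.mem_insert_self j F') h
    have hF'T : Disjoint F' T := Finset.disjoint_of_subset_left (Finset.subset_insert j F') hFT
    set C := ENNReal.ofReal (1 + p) with hC_def
    set H : (Fin n → ℝ) → ENNReal :=
      fun ζ => ∑ R ∈ (insert j F').powerset, ENNReal.ofReal (|D (T ∪ R) ζ| ^ p) with hH_def
    have hmeasH : Measurable H := Finset.measurable_sum _ fun R _ => hmeasf _
    have hkey : ∀ ζ : Fin n → ℝ,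
        (∑ R ∈ F'.powerset, ENNReal.ofReal (|D (T ∪ R) ζ| ^ p)) ≤
          C * (∫⋯∫⁻_{j}, H ∂(fun _ => (volume : Measure ℝ))) ζ := by
      intro ζ
      calc ∑ R ∈ F'.powerset, ENNReal.ofReal (|D (T ∪ R) ζ| ^ p)
          ≤ ∑ R ∈ F'.powerset, C * ∫⁻ t,
            (ENNReal.ofReal (|D (T ∪ R) (update ζ j t)| ^ p)
              + ENNReal.ofReal (|D (insert j (T ∪ R)) (update ζ j t)| ^ p)) := by
            refine Finset.sum_le_sum fun R hR => ?_
            have hjTR : j ∉ T ∪ R := by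
              intro hmem
              rcases Finset.mem_union.mp hmem with hh | hh
              · exact hjT hh
              · exact hj (Finset.mem_powerset.mp hR hh)
            exact face_step1 hp D hDderiv hDcont (T ∪ R) j hjTR ζ
        _ = C * ∑ R ∈ F'.powerset, ∫⁻ t,
            (ENNReal.ofReal (|D (T ∪ R) (update ζ j t)| ^ p)
              + ENNReal.ofReal (|D (insert j (T ∪ R)) (update ζ j t)| ^ p)) := by
            rw [Finset.mul_sum]
        _ = C * ∫⁻ t, ∑ R ∈ F'.powerset,
            (ENNReal.ofReal (|D (T ∪ R) (update ζ j t)| ^ p)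
              + ENNReal.ofReal (|D (insert j (T ∪ R)) (update ζ j t)| ^ p)) := by
            congr 1
            exact (lintegral_finset_sum _ fun R _ =>
              ((hmeasf (T ∪ R)).comp (measurable_update ζ)).add
                ((hmeasf (insert j (T ∪ R))).comp (measurable_update ζ))).symm
        _ = C * ∫⁻ t, H (update ζ j t) := by
            congr 1
            refine lintegral_congr fun t => ?_
            show _ = ∑ R ∈ (insert j F').powerset,
              ENNReal.ofReal (|D (T ∪ R) (update ζ j t)| ^ p)
            rw [Finset.sum_powerset_insert hj, Finset.sum_add_distrib]
            congr 1
            refine Finset.sum_congr rfl fun R _ => ?_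
            rw [Finset.union_insert]
        _ = C * (∫⋯∫⁻_{j}, H ∂(fun _ => (volume : Measure ℝ))) ζ := by
            rw [lmarginal_singleton]
    calc ENNReal.ofReal (|D T η| ^ p)
        ≤ C ^ F'.card * (∫⋯∫⁻_F',
            (fun ζ => ∑ R ∈ F'.powerset, ENNReal.ofReal (|D (T ∪ R) ζ| ^ p))
            ∂(fun _ => (volume : Measure ℝ))) η := IH hF'T
      _ ≤ C ^ F'.card * (∫⋯∫⁻_F',
            (fun ζ => C * (∫⋯∫⁻_{j}, H ∂(fun _ => (volume : Measure ℝ))) ζ)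
            ∂(fun _ => (volume : Measure ℝ))) η :=
          mul_le_mul_right (lmarginal_mono hkey η) _
      _ = C ^ F'.card * (C * (∫⋯∫⁻_F',
            (∫⋯∫⁻_{j}, H ∂(fun _ => (volume : Measure ℝ)))
            ∂(fun _ => (volume : Measure ℝ))) η) := by
          congr 1
          exact lmarginal_const_mul' _ F' C (hmeasH.lmarginal _) η
      _ = C ^ F'.card * (C * (∫⋯∫⁻_(F' ∪ {j}), H ∂(fun _ => (volume : Measure ℝ))) η) := by
          rw [lmarginal_union _ H hmeasH (Finset.disjoint_singleton_right.mpr hj)]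
      _ = C ^ (insert j F').card *
            (∫⋯∫⁻_(insert j F'), H ∂(fun _ => (volume : Measure ℝ))) η := by
          rw [show F' ∪ {j} = insert j F' by
            rw [Finset.union_comm, ← Finset.insert_eq],
            Finset.card_insert_of_notMem hj, pow_succ]
          ring

open Function in
/-- **Estimate for the face trace integrals.** Let `1 < p < ∞`, let `u` be Cⁿ on ℝⁿ with
all distinct-index mixed partials (encoded by the family `D`, `D ∅ = u`) in `Lᵖ(ℝⁿ)`.
For an `n`-rectangle `P` with bottom corner `x` and top corner `x'` and any nonempty
`S = {i_1 < ... < i_k} ⊆ {1,...,n}`,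
`|∫_{P_{i_1...i_k}} ∂^k u/∂x_{i_1}⋯∂x_{i_k} dη| ≤
   |x − x'|^{k(p−1)/p} (1+p)^{(n−k)/p} ‖u‖_{S_p^1(ℝⁿ)}`,
where `‖u‖_{S_p^1} = (Σ_T ‖D T‖_{Lᵖ}ᵖ)^{1/p}`. -/
theorem face_trace_integral_estimate {n : ℕ} (p : ℝ) (hp : 1 < p)
    (u : (Fin n → ℝ) → ℝ)
    (D : Finset (Fin n) → (Fin n → ℝ) → ℝ)
    (hD0 : D ∅ = u)
    (hDderiv : ∀ (T : Finset (Fin n)) (i : Fin n), i ∉ T → ∀ η : Fin n → ℝ,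
      HasDerivAt (fun t => D T (Function.update η i t)) (D (insert i T) η) (η i))
    (hDcont : ∀ T, Continuous (D T))
    (hDLp : ∀ T : Finset (Fin n), Integrable (fun y => |D T y| ^ p))
    (x x' : Fin n → ℝ) (hxx : ∀ i, x i < x' i)
    (S : Finset (Fin n)) (hS : S.Nonempty) :
    |faceIntegral x x' D S| ≤
      euclDist x x' ^ ((S.card : ℝ) * (p - 1) / p) *
        (1 + p) ^ (((n : ℝ) - S.card) / p) *
        (∑ T : Finset (Fin n), ∫ y, |D T y| ^ p) ^ (1 / p) := by
  classical
  have hp0 : (0:ℝ) < p := lt_trans zero_lt_one hp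
  have hpq : p.HolderConjugate (Real.conjExponent p) := Real.HolderConjugate.conjExponent hp
  set q := Real.conjExponent p with hq_def
  have hq0 : (0:ℝ) < q := hpq.symm.pos
  set C := ENNReal.ofReal (1 + p) with hC_def
  set d := euclDist x x' with hd_def
  have hd0 : 0 ≤ d := Real.sqrt_nonneg _
  have hdi : ∀ i : Fin n, x' i - x i ≤ d := by
    intro i
    have h1 : (x i - x' i) ^ 2 ≤ ∑ j, (x j - x' j) ^ 2 :=
      Finset.single_le_sum (f := fun j => (x j - x' j) ^ 2)
        (fun j _ => sq_nonneg _) (Finset.mem_univ i)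
    have h2 := Real.sqrt_le_sqrt h1
    rw [Real.sqrt_sq_eq_abs] at h2
    calc x' i - x i ≤ |x i - x' i| := by rw [abs_sub_comm]; exact le_abs_self _
      _ ≤ d := h2
  set N := ∑ T : Finset (Fin n), ∫ y, |D T y| ^ p with hN_def
  have hint_nonneg : ∀ T : Finset (Fin n), (0:ℝ) ≤ ∫ y, |D T y| ^ p :=
    fun T => integral_nonneg fun y => Real.rpow_nonneg (abs_nonneg _) _
  have hN0 : 0 ≤ N := Finset.sum_nonneg fun T _ => hint_nonneg T
  have hmeasf : ∀ (W : Finset (Fin n)),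
      Measurable fun ζ : Fin n → ℝ => ENNReal.ofReal (|D W ζ| ^ p) := fun W =>
    ((hDcont W).abs.rpow_const fun _ => Or.inr hp0.le).measurable.ennreal_ofReal
  -- the box and the face integrand
  set box : Set (↥S → ℝ) := Set.univ.pi fun i : ↥S => Set.Icc (x i) (x' i) with hbox_def
  have hboxm : MeasurableSet box := MeasurableSet.univ_pi fun i => measurableSet_Icc
  have hboxc : IsCompact box := isCompact_univ_pi fun i => isCompact_Icc
  have hupdc : Continuous fun η : ↥S → ℝ => updateFinset x S η := by
    apply continuous_pi; intro i
    by_cases h : i ∈ S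
    · simp only [updateFinset, h, dif_pos]
      exact continuous_apply _
    · simp only [updateFinset, h, dif_neg, not_false_iff]
      exact continuous_const
  set φ : (↥S → ℝ) → ℝ := fun η => D S (updateFinset x S η) with hφ_def
  have hφc : Continuous φ := (hDcont S).comp hupdc
  have hfaceeq : faceIntegral x x' D S = ∫ η in box, φ η := rfl
  have hφint : IntegrableOn φ box := hφc.continuousOn.integrableOn_compact hboxc
  -- Step A : reduce to the lintegral over the box
  have hA : ENNReal.ofReal |faceIntegral x x' D S| ≤
      ∫⁻ η in box, ENNReal.ofReal |φ η| := by
    have h1 : |faceIntegral x x' D S| ≤ ∫ η in box, |φ η| := by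
      rw [hfaceeq]
      simpa [Real.norm_eq_abs] using
        norm_integral_le_integral_norm (μ := volume.restrict box) φ
    have h2 : ENNReal.ofReal (∫ η in box, |φ η|) = ∫⁻ η in box, ENNReal.ofReal |φ η| :=
      ofReal_integral_eq_lintegral_ofReal hφint.abs (ae_of_all _ fun η => abs_nonneg _)
    exact h2 ▸ ENNReal.ofReal_le_ofReal h1
  -- Step B : Hölder on the box
  have hB : ∫⁻ η in box, ENNReal.ofReal |φ η| ≤
      (∫⁻ η in box, ENNReal.ofReal (|φ η| ^ p)) ^ (1 / p) *
        (∏ i : ↥S, ENNReal.ofReal (x' i - x i)) ^ (1 / q) := by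
    have hmφ : AEMeasurable (fun η => ENNReal.ofReal |φ η|) (volume.restrict box) :=
      (hφc.abs.measurable.ennreal_ofReal).aemeasurable
    have hH := ENNReal.lintegral_mul_le_Lp_mul_Lq (volume.restrict box) hpq hmφ
      (aemeasurable_const (b := (1:ENNReal)))
    simp only [Pi.mul_apply, mul_one, ENNReal.one_rpow] at hH
    have hvol : volume box = ∏ i : ↥S, ENNReal.ofReal (x' i - x i) := by
      rw [hbox_def, volume_pi_pi]
      exact Finset.prod_congr rfl fun i _ => Real.volume_Icc
    have h1 : ∫⁻ _η in box, (1:ENNReal) = ∏ i : ↥S, ENNReal.ofReal (x' i - x i) := by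
      rw [setLIntegral_one, ← hvol]
    rw [h1] at hH
    have h2 : ∀ η : ↥S → ℝ, ENNReal.ofReal |φ η| ^ p = ENNReal.ofReal (|φ η| ^ p) :=
      fun η => ENNReal.ofReal_rpow_of_nonneg (abs_nonneg _) hp0.le
    calc ∫⁻ η in box, ENNReal.ofReal |φ η| ≤ _ := hH
      _ = (∫⁻ η in box, ENNReal.ofReal (|φ η| ^ p)) ^ (1 / p) *
          (∏ i : ↥S, ENNReal.ofReal (x' i - x i)) ^ (1 / q) := by
          congr 1
          congr 1
          exact lintegral_congr fun η => h2 η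
  -- Step C : trace estimate for the Lᵖ integral over the box
  have hC : ∫⁻ η in box, ENNReal.ofReal (|φ η| ^ p) ≤ C ^ Sᶜ.card * ENNReal.ofReal N := by
    set g : (Fin n → ℝ) → ENNReal :=
      fun ζ => ∑ R ∈ Sᶜ.powerset, ENNReal.ofReal (|D (S ∪ R) ζ| ^ p) with hg_def
    have hmeasg : Measurable g := Finset.measurable_sum _ fun R _ => hmeasf _
    have hsum : ∫⁻ ζ, g ζ ≤ ENNReal.ofReal N := by
      rw [hg_def]
      rw [lintegral_finset_sum _ fun R _ => hmeasf _]
      have heach : ∀ R ∈ Sᶜ.powerset,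
          (∫⁻ ζ, ENNReal.ofReal (|D (S ∪ R) ζ| ^ p)) =
            ENNReal.ofReal (∫ ζ, |D (S ∪ R) ζ| ^ p) := fun R _ =>
        (ofReal_integral_eq_lintegral_ofReal (hDLp _)
          (ae_of_all _ fun ζ => Real.rpow_nonneg (abs_nonneg _) _)).symm
      rw [Finset.sum_congr rfl heach,
        ← ENNReal.ofReal_sum_of_nonneg fun R _ => hint_nonneg _]
      apply ENNReal.ofReal_le_ofReal
      have hinj : ∀ R₁ ∈ Sᶜ.powerset, ∀ R₂ ∈ Sᶜ.powerset,
          S ∪ R₁ = S ∪ R₂ → R₁ = R₂ := by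
        have haux : ∀ R₁ R₂ : Finset (Fin n), R₁ ⊆ Sᶜ → R₂ ⊆ Sᶜ →
            S ∪ R₁ = S ∪ R₂ → R₁ ⊆ R₂ := by
          intro R₁ R₂ h1 h2 he i hi
          have : i ∈ S ∪ R₂ := by rw [← he]; exact Finset.mem_union_right _ hi
          rcases Finset.mem_union.mp this with hh | hh
          · exact absurd hh (Finset.mem_compl.mp (h1 hi))
          · exact hh
        intro R₁ h1 R₂ h2 he
        exact Finset.Subset.antisymm
          (haux R₁ R₂ (Finset.mem_powerset.mp h1) (Finset.mem_powerset.mp h2) he)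
          (haux R₂ R₁ (Finset.mem_powerset.mp h2) (Finset.mem_powerset.mp h1) he.symm)
      calc ∑ R ∈ Sᶜ.powerset, ∫ ζ, |D (S ∪ R) ζ| ^ p
          = ∑ T ∈ Sᶜ.powerset.image (fun R => S ∪ R), ∫ ζ, |D T ζ| ^ p :=
            (Finset.sum_image (f := fun T => ∫ ζ, |D T ζ| ^ p)
              (g := fun R => S ∪ R) hinj).symm
        _ ≤ N := by
            rw [hN_def]
            exact Finset.sum_le_sum_of_subset_of_nonneg (Finset.subset_univ _)
              fun T _ _ => hint_nonneg T
    calc ∫⁻ η in box, ENNReal.ofReal (|φ η| ^ p)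
        ≤ ∫⁻ η : ↥S → ℝ, ENNReal.ofReal (|φ η| ^ p) := setLIntegral_le_lintegral _ _
      _ ≤ ∫⁻ η : ↥S → ℝ, C ^ Sᶜ.card *
          (∫⋯∫⁻_Sᶜ, g ∂(fun _ => (volume : Measure ℝ))) (updateFinset x S η) :=
          lintegral_mono fun η => face_step2 hp D hDderiv hDcont Sᶜ S
            disjoint_compl_left (updateFinset x S η)
      _ = C ^ Sᶜ.card * ∫⁻ η : ↥S → ℝ,
          (∫⋯∫⁻_Sᶜ, g ∂(fun _ => (volume : Measure ℝ))) (updateFinset x S η) :=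
          lintegral_const_mul _ ((hmeasg.lmarginal _).comp measurable_updateFinset)
      _ = C ^ Sᶜ.card *
          (∫⋯∫⁻_S, (∫⋯∫⁻_Sᶜ, g ∂(fun _ => (volume : Measure ℝ)))
            ∂(fun _ => (volume : Measure ℝ))) x := by
          congr 1
      _ = C ^ Sᶜ.card * (∫⋯∫⁻_(S ∪ Sᶜ), g ∂(fun _ => (volume : Measure ℝ))) x := by
          rw [lmarginal_union _ g hmeasg disjoint_compl_right]
      _ = C ^ Sᶜ.card * ∫⁻ ζ, g ζ := by
          rw [Finset.union_compl, lmarginal_univ, ← volume_pi]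
      _ ≤ C ^ Sᶜ.card * ENNReal.ofReal N := mul_le_mul_right hsum _
  -- Put everything together
  have hcard : ((Sᶜ.card : ℕ) : ℝ) = (n : ℝ) - S.card := by
    rw [Finset.card_compl, Fintype.card_fin, Nat.cast_sub]
    simpa using Finset.card_le_univ S
  have hkq : ((S.card : ℕ) : ℝ) / q = (S.card : ℝ) * (p - 1) / p := by
    have hqv : q = p / (p - 1) := rfl
    rw [hqv]
    have h1 : p - 1 ≠ 0 := by intro h; nlinarith
    field_simp
  set RHS := d ^ ((S.card : ℝ) * (p - 1) / p) * (1 + p) ^ (((n : ℝ) - S.card) / p) *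
    N ^ (1 / p) with hRHS_def
  have hexp1 : (0:ℝ) ≤ (S.card : ℝ) * (p - 1) / p :=
    div_nonneg (mul_nonneg (Nat.cast_nonneg _) (by linarith)) hp0.le
  have hRHS0 : 0 ≤ RHS := by
    refine mul_nonneg (mul_nonneg ?_ ?_) ?_
    · exact Real.rpow_nonneg hd0 _
    · exact Real.rpow_nonneg (by linarith) _
    · exact Real.rpow_nonneg hN0 _
  rw [← ENNReal.ofReal_le_ofReal_iff hRHS0]
  -- ENNReal computation
  have hfact1 : (C ^ Sᶜ.card * ENNReal.ofReal N) ^ (1/p) =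
      ENNReal.ofReal ((1 + p) ^ (((n:ℝ) - S.card) / p)) * ENNReal.ofReal (N ^ (1/p)) := by
    rw [ENNReal.mul_rpow_of_nonneg _ _ (by positivity : (0:ℝ) ≤ 1/p)]
    congr 1
    · rw [← ENNReal.rpow_natCast C Sᶜ.card, ← ENNReal.rpow_mul,
        ENNReal.ofReal_rpow_of_pos (by linarith : (0:ℝ) < 1 + p)]
      congr 1
      rw [← hcard]
      ring
    · exact ENNReal.ofReal_rpow_of_nonneg hN0 (by positivity)
  have hfact2 : (∏ i : ↥S, ENNReal.ofReal (x' i - x i)) ^ (1/q) ≤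
      ENNReal.ofReal (d ^ ((S.card : ℝ) * (p - 1) / p)) := by
    have hprod : (∏ i : ↥S, ENNReal.ofReal (x' i - x i)) ≤
        ENNReal.ofReal d ^ S.card := by
      have := Finset.prod_le_pow_card Finset.univ
        (fun i : ↥S => ENNReal.ofReal (x' i - x i)) (ENNReal.ofReal d)
        (fun i _ => ENNReal.ofReal_le_ofReal (hdi i))
      simpa [Finset.card_univ, Fintype.card_coe] using this
    calc (∏ i : ↥S, ENNReal.ofReal (x' i - x i)) ^ (1/q)
        ≤ (ENNReal.ofReal d ^ S.card) ^ (1/q) :=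
          ENNReal.rpow_le_rpow hprod (by positivity)
      _ = ENNReal.ofReal d ^ ((S.card : ℝ) * (p - 1) / p) := by
          rw [← ENNReal.rpow_natCast (ENNReal.ofReal d) S.card, ← ENNReal.rpow_mul, ← hkq]
          congr 1
          ring
      _ = ENNReal.ofReal (d ^ ((S.card : ℝ) * (p - 1) / p)) :=
          ENNReal.ofReal_rpow_of_nonneg hd0 hexp1
  calc ENNReal.ofReal |faceIntegral x x' D S|
      ≤ ∫⁻ η in box, ENNReal.ofReal |φ η| := hA
    _ ≤ (∫⁻ η in box, ENNReal.ofReal (|φ η| ^ p)) ^ (1 / p) *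
        (∏ i : ↥S, ENNReal.ofReal (x' i - x i)) ^ (1 / q) := hB
    _ ≤ (C ^ Sᶜ.card * ENNReal.ofReal N) ^ (1/p) *
        (∏ i : ↥S, ENNReal.ofReal (x' i - x i)) ^ (1 / q) :=
        mul_le_mul_left (ENNReal.rpow_le_rpow hC (by positivity)) _
    _ ≤ (ENNReal.ofReal ((1 + p) ^ (((n:ℝ) - S.card) / p)) * ENNReal.ofReal (N ^ (1/p))) *
        ENNReal.ofReal (d ^ ((S.card : ℝ) * (p - 1) / p)) := by
        rw [hfact1]
        exact mul_le_mul_right hfact2 _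
    _ = ENNReal.ofReal RHS := by
        rw [hRHS_def,
          ENNReal.ofReal_mul (mul_nonneg (Real.rpow_nonneg hd0 _)
            (Real.rpow_nonneg (by linarith : (0:ℝ) ≤ 1 + p) _)),
          ENNReal.ofReal_mul (Real.rpow_nonneg hd0 _)]
        ring
end

section
/- Let n ∈ ℕ and u ∈ S_1^1(ℝⁿ) ∩ Cⁿ_loc(ℝⁿ). Then u is bounded with ‖u‖_{C⁰(ℝⁿ)} ≤ (3ⁿ − 2ⁿ + Γ_n^{−1}) ‖u‖_{S_1^1(ℝⁿ)}, where Γ_n is the volume of the unit ball in ℝⁿ. Consequently S_1^1(ℝⁿ) embeds boundedly into C⁰(ℝⁿ) (bounded continuous functions). -/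
/-!
Integrating the fundamental theorem of calculus in one coordinate gives the one-dimensional
bound `‖v t₀‖ ≤ ‖v‖_{L¹} + ‖v'‖_{L¹}`. Applying it to a mixed partial `∂_S u` in a coordinate
`i ∉ S` splits it into `∂_S u` and `∂_{S ∪ {i}} u`, each integrated over the line through the
point in direction `i`. Doing this successively in all `n` coordinates yields
`|u x| ≤ ∑_S ‖∂_S u‖_{L¹} = ‖u‖_{S_1^1}`, and the constant `3ⁿ - 2ⁿ + Γₙ⁻¹` is at least `1`.
-/

open MeasureTheory Finset

/-- Volume of the Euclidean unit ball in ℝⁿ. -/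
noncomputable def unitBallVol (n : ℕ) : ℝ :=
  (volume {y : Fin n → ℝ | ∑ i, (y i) ^ 2 ≤ 1}).toReal

open Filter

section OneDimensional

variable {E : Type*} [NormedAddCommGroup E] [NormedSpace ℝ E] [CompleteSpace E]

theorem enorm_le_lintegral_enorm_add_lintegral_enorm_of_hasDerivAt {v w : ℝ → E}
    (hv : ∀ t, HasDerivAt v (w t) t) (t₀ : ℝ) :
    ‖v t₀‖ₑ ≤ (∫⁻ t, ‖v t‖ₑ) + ∫⁻ t, ‖w t‖ₑ := by
  rcases eq_top_or_lt_top (∫⁻ t, ‖v t‖ₑ) with hv_top | hv_fin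
  · simp [hv_top]
  rcases eq_top_or_lt_top (∫⁻ t, ‖w t‖ₑ) with hw_top | hw_fin
  · simp [hw_top]
  have hv_int : Integrable v :=
    ⟨(continuous_iff_continuousAt.2 fun t => (hv t).continuousAt).aestronglyMeasurable, hv_fin⟩
  -- `w` is measurable because it is the derivative of `v`.
  have hw_int : Integrable w := by
    refine ⟨?_, hw_fin⟩
    rw [show w = deriv v from funext fun t => (hv t).deriv.symm]
    exact aestronglyMeasurable_deriv v _
  have hv_atBot : Tendsto v atBot (nhds 0) :=
    tendsto_zero_of_hasDerivAt_of_integrableOn_Iic (a := t₀) (fun t _ => hv t)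
      hw_int.integrableOn hv_int.integrableOn
  have hFTC : ∫ t in Set.Iic t₀, w t = v t₀ := by
    simpa using integral_Iic_of_hasDerivAt_of_tendsto' (fun t _ => hv t) hw_int.integrableOn
      hv_atBot
  calc ‖v t₀‖ₑ = ‖∫ t in Set.Iic t₀, w t‖ₑ := by rw [hFTC]
    _ ≤ ∫⁻ t in Set.Iic t₀, ‖w t‖ₑ := enorm_integral_le_lintegral_enorm _
    _ ≤ ∫⁻ t, ‖w t‖ₑ := setLIntegral_le_lintegral _ _
    _ ≤ _ := le_add_self

end OneDimensional

theorem MeasureTheory.lmarginal_add_left {δ : Type*} {X : δ → Type*}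
    [∀ i, MeasurableSpace (X i)] (μ : ∀ i, Measure (X i)) [DecidableEq δ]
    {f : (∀ i, X i) → ENNReal} (hf : Measurable f) (g : (∀ i, X i) → ENNReal) (s : Finset δ) :
    ∫⋯∫⁻_s, (f + g) ∂μ = ∫⋯∫⁻_s, f ∂μ + ∫⋯∫⁻_s, g ∂μ :=
  funext fun _ => lintegral_add_left (hf.comp measurable_updateFinset) _

section MixedPartials

variable {ι E : Type*} [DecidableEq ι] [NormedAddCommGroup E] [NormedSpace ℝ E] [CompleteSpace E]

/-- `D S` is the mixed partial derivative `∂_S D ∅`, taken once in each coordinate of `S`. -/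
def HasMixedPartials (D : Finset ι → (ι → ℝ) → E) : Prop :=
  ∀ (S : Finset ι) (i : ι), i ∉ S → ∀ η : ι → ℝ,
    HasDerivAt (fun t => D S (Function.update η i t)) (D (insert i S) η) (η i)

namespace HasMixedPartials

variable {D : Finset ι → (ι → ℝ) → E}

theorem enorm_le_lintegral_line (hD : HasMixedPartials D) {S : Finset ι} {i : ι} (hiS : i ∉ S)
    (y : ι → ℝ) :
    ‖D S y‖ₑ ≤ (∫⁻ t, ‖D S (Function.update y i t)‖ₑ) +
      ∫⁻ t, ‖D (insert i S) (Function.update y i t)‖ₑ := by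
  have hderiv : ∀ t, HasDerivAt (fun s => D S (Function.update y i s))
      (D (insert i S) (Function.update y i t)) t := fun t => by
    simpa using hD S i hiS (Function.update y i t)
  simpa using enorm_le_lintegral_enorm_add_lintegral_enorm_of_hasDerivAt hderiv (y i)

variable [Fintype ι]

theorem enorm_le_sum_powerset_lmarginal (hD : HasMixedPartials D)
    (hD_cont : ∀ S, Continuous (D S)) (x : ι → ℝ) (T : Finset ι) :
    ‖D ∅ x‖ₑ ≤ ∑ S ∈ T.powerset, (∫⋯∫⁻_T, fun y => ‖D S y‖ₑ) x := by
  have hmeas : ∀ S, Measurable fun y => ‖D S y‖ₑ := fun S => (hD_cont S).enorm.measurable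
  induction T using Finset.induction_on with
  | empty => simp
  | @insert i T hiT ih =>
    have step : ∀ S ∈ T.powerset, (∫⋯∫⁻_T, fun y => ‖D S y‖ₑ) x ≤
        (∫⋯∫⁻_insert i T, fun y => ‖D S y‖ₑ) x +
          (∫⋯∫⁻_insert i T, fun y => ‖D (insert i S) y‖ₑ) x := by
      intro S hS
      have hiS : i ∉ S := fun h => hiT (mem_powerset.1 hS h)
      have hline_meas : Measurable fun y => ∫⁻ t, ‖D S (Function.update y i t)‖ₑ := by
        simpa only [lmarginal_singleton] using (hmeas S).lmarginal (fun _ => volume) (s := {i})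
      calc (∫⋯∫⁻_T, fun y => ‖D S y‖ₑ) x
          ≤ (∫⋯∫⁻_T, (fun y => ∫⁻ t, ‖D S (Function.update y i t)‖ₑ) +
              fun y => ∫⁻ t, ‖D (insert i S) (Function.update y i t)‖ₑ) x :=
            lmarginal_mono (fun y => hD.enorm_le_lintegral_line hiS y) x
        _ = _ := by
          rw [lmarginal_add_left _ hline_meas, lmarginal_insert' _ (hmeas S) hiT,
            lmarginal_insert' _ (hmeas _) hiT]
          rfl
    calc ‖D ∅ x‖ₑ ≤ _ := ih
      _ ≤ _ := sum_le_sum step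
      _ = _ := by rw [sum_powerset_insert hiT, sum_add_distrib]

theorem enorm_le_sum_lintegral_enorm (hD : HasMixedPartials D)
    (hD_cont : ∀ S, Continuous (D S)) (x : ι → ℝ) :
    ‖D ∅ x‖ₑ ≤ ∑ S, ∫⁻ y, ‖D S y‖ₑ := by
  simpa [powerset_univ, ← volume_pi] using hD.enorm_le_sum_powerset_lmarginal hD_cont x univ

theorem norm_le_sum_integral_norm (hD : HasMixedPartials D)
    (hD_cont : ∀ S, Continuous (D S)) (hD_int : ∀ S, Integrable (D S)) (x : ι → ℝ) :
    ‖D ∅ x‖ ≤ ∑ S, ∫ y, ‖D S y‖ := by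
  have hnonneg : ∀ S, 0 ≤ ∫ y, ‖D S y‖ := fun S => integral_nonneg fun _ => norm_nonneg _
  rw [← ENNReal.ofReal_le_ofReal_iff (sum_nonneg fun S _ => hnonneg S),
    ENNReal.ofReal_sum_of_nonneg fun S _ => hnonneg S, ofReal_norm]
  simpa only [ofReal_integral_norm_eq_lintegral_enorm (hD_int _)]
    using hD.enorm_le_sum_lintegral_enorm hD_cont x

end HasMixedPartials

end MixedPartials

theorem one_le_three_pow_sub_two_pow_add_inv_unitBallVol (n : ℕ) :
    1 ≤ (3 : ℝ) ^ n - 2 ^ n + (unitBallVol n)⁻¹ := by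
  rcases n.eq_zero_or_pos with rfl | hn
  · simp [unitBallVol, volume_pi]
  have h : 2 ^ n + 1 ≤ 3 ^ n := Nat.pow_lt_pow_left (by norm_num) hn.ne'
  have h' : (2 : ℝ) ^ n + 1 ≤ 3 ^ n := by exact_mod_cast h
  have hvol : 0 ≤ (unitBallVol n)⁻¹ := inv_nonneg.2 ENNReal.toReal_nonneg
  linarith

/-- **Uniform bound for smooth functions of `S_1^1(ℝⁿ)`.** If `u` is Cⁿ on ℝⁿ (its
distinct-index mixed partials encoded by `D`, `D ∅ = u`) and all of them lie in
`L¹(ℝⁿ)`, then `u` is bounded with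
`‖u‖_{C⁰(ℝⁿ)} ≤ (3ⁿ − 2ⁿ + Γₙ⁻¹) ‖u‖_{S_1^1(ℝⁿ)}`, where `Γₙ` is the volume of the
Euclidean unit ball and `‖u‖_{S_1^1}` is the sum of the `L¹` norms of `u` and of all its
distinct-index mixed derivatives. Consequently `S_1^1(ℝⁿ)` embeds boundedly into the
space `C⁰(ℝⁿ)` of bounded continuous functions. -/
theorem sup_bound_S11 {n : ℕ}
    (u : (Fin n → ℝ) → ℝ)
    (D : Finset (Fin n) → (Fin n → ℝ) → ℝ)
    (hD0 : D ∅ = u)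
    (hDderiv : ∀ (S : Finset (Fin n)) (i : Fin n), i ∉ S → ∀ η : Fin n → ℝ,
      HasDerivAt (fun t => D S (Function.update η i t)) (D (insert i S) η) (η i))
    (hDcont : ∀ S, Continuous (D S))
    (hDL1 : ∀ S : Finset (Fin n), Integrable (D S)) :
    ∀ x : Fin n → ℝ,
      |u x| ≤ ((3 : ℝ) ^ n - 2 ^ n + (unitBallVol n)⁻¹) *
        ∑ S : Finset (Fin n), ∫ y, |D S y| := by
  intro x
  have hbound : |u x| ≤ ∑ S, ∫ y, |D S y| := by
    simpa only [hD0, Real.norm_eq_abs] using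
      HasMixedPartials.norm_le_sum_integral_norm hDderiv hDcont hDL1 x
  exact hbound.trans <| le_mul_of_one_le_left
    (sum_nonneg fun S _ => integral_nonneg fun _ => abs_nonneg _)
    (one_le_three_pow_sub_two_pow_add_inv_unitBallVol n)
end
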